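/- arXiv:2101.08090 — 9 statements merged into one kernel-verified Lean document; each statement's English description precedes it below -/
import Mathlib

section
/- Let N = N(s_0 | a_1/b_1, …, a_m/b_m) be an n×n star-shaped intersection matrix built from an integer s_0 ≥ 1 and m ≥ 3 Hirzebruch–Jung chain matrices N_1, …, N_m with associated data (a_j, b_j, R_j). Then s_0 > Σ_{j=1}^m b_j/a_j, and det(N) = (−1)^n · (Π_{j=1}^m a_j) · (s_0 − Σ_{j=1}^m b_j/a_j). In particular |det(N)| admits the factorization into two positive integers |det(N)| = ((Π_j a_j)/lcm(a_1,…,a_m)) · (lcm(a_1,…,a_m)·(s_0 − Σ_j b_j/a_j)). -/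
/-!
Put `x_j = R_j / a_j`, so that `N_j x_j = -e_0`. The vector `w = (1, x_1, …, x_m)` then satisfies
`N w = (Σ_j b_j/a_j - s₀) e_node`. Evaluating the quadratic form at `w` gives `s₀ > Σ_j b_j/a_j`,
and Cramer's rule at the node coordinate gives `det N = (Σ_j b_j/a_j - s₀) · Π_j det N_j`, the
complementary minor being block diagonal. Cramer's rule at the terminal coordinate `R_j(w_j) = 1`
gives `det N_j = ±a_j`, because deleting the first row and last column of a chain matrix leaves a
triangular matrix with ones on the diagonal. The factorization of `|det N|` is then arithmetic,
since `lcm / a_j` is an integer.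
-/

open Matrix BigOperators

namespace Matrix

variable {n R : Type*} [Fintype n] [DecidableEq n] [CommRing R]

theorem det_mul_apply_of_mulVec_eq_single (A : Matrix n n R) {v : n → R} {j : n} {c : R}
    (h : A *ᵥ v = Pi.single j c) (i : n) : A.det * v i = A.adjugate i j * c := by
  have key : A.adjugate *ᵥ (A *ᵥ v) = A.det • v := by
    rw [mulVec_mulVec, adjugate_mul, smul_mulVec, one_mulVec]
  simpa [h, mulVec_single] using (congrFun key i).symm

theorem adjugate_none_none {ι : Type*} [Fintype ι] [DecidableEq ι]
    (A : Matrix (Option ι) (Option ι) R) :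
    A.adjugate none none = (A.submatrix some some).det := by
  let e : Option ι ≃ ι ⊕ Unit := Equiv.optionEquivSumPUnit ι
  have : (A.updateRow none (Pi.single none 1)).submatrix e.symm e.symm =
      fromBlocks (A.submatrix some some) (of fun i (_ : Unit) => A (some i) none) 0 1 := by
    ext (i | _) (k | _) <;> simp [e, updateRow_apply]
  rw [adjugate_apply, ← det_submatrix_equiv_self e.symm, this, det_fromBlocks_zero₂₁, det_one,
    mul_one]

theorem det_blockDiagonal' {o : Type*} [Fintype o] [DecidableEq o] {m' : o → Type*}
    [∀ k, Fintype (m' k)] [∀ k, DecidableEq (m' k)] (M : ∀ k, Matrix (m' k) (m' k) R) :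
    (blockDiagonal' M).det = ∏ k, (M k).det := by
  let _ : LinearOrder o := LinearOrder.lift' (Fintype.equivFin o) (Fintype.equivFin o).injective
  rw [(blockTriangular_blockDiagonal' M).det_fintype]
  refine Finset.prod_congr rfl fun k _ => ?_
  rw [← det_submatrix_equiv_self (Equiv.sigmaSubtype k).symm]
  congr 1
  ext i j
  exact blockDiagonal'_apply_eq M k i j

theorem adjugate_last_zero_of_hessenberg {ℓ : ℕ} (A : Matrix (Fin (ℓ + 1)) (Fin (ℓ + 1)) R)
    (hsub : ∀ i : Fin ℓ, A i.succ i.castSucc = 1)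
    (hzero : ∀ i j : Fin (ℓ + 1), (j : ℕ) + 1 < i → A i j = 0) :
    A.adjugate (Fin.last ℓ) 0 = (-1) ^ ℓ := by
  have htri : (A.submatrix Fin.succ Fin.castSucc).BlockTriangular id := fun i j hji =>
    hzero _ _ (by simpa using hji)
  rw [adjugate_fin_succ_eq_det_submatrix, Fin.succAbove_zero, Fin.succAbove_last,
    det_of_isUpperTriangular htri]
  simp [hsub]

theorem det_eq_of_hessenberg_of_mulVec_eq_single {ℓ : ℕ}
    (A : Matrix (Fin (ℓ + 1)) (Fin (ℓ + 1)) R)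
    (hsub : ∀ i : Fin ℓ, A i.succ i.castSucc = 1)
    (hzero : ∀ i j : Fin (ℓ + 1), (j : ℕ) + 1 < i → A i j = 0)
    {v : Fin (ℓ + 1) → R} {c : R} (hv : v (Fin.last ℓ) = 1) (h : A *ᵥ v = Pi.single 0 c) :
    A.det = (-1) ^ ℓ * c := by
  simpa [hv, adjugate_last_zero_of_hessenberg A hsub hzero] using
    A.det_mul_apply_of_mulVec_eq_single h (Fin.last ℓ)

theorem map_intCast_mulVec_div_eq {K : Type*} [Field K] [CharZero K] {A : Matrix n n ℤ}
    {v : n → ℤ} {a : ℤ} {j : n} (h : A *ᵥ v = Pi.single j (-a)) (ha : a ≠ 0) :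
    A.map (Int.cast : ℤ → K) *ᵥ (fun i => (v i : K) / a) = -Pi.single j 1 := by
  have hcast : A.map (Int.cast : ℤ → K) *ᵥ (fun i => (v i : K)) = Pi.single j (-(a : K)) := by
    ext i
    have := (Int.castRingHom K).map_mulVec A v i
    rw [h, Pi.single_apply] at this
    rw [Pi.single_apply]
    convert this.symm using 1
    · rfl
    · split_ifs <;> simp
  have hdiv : (fun i => (v i : K) / a) = (a : K)⁻¹ • fun i => (v i : K) := by
    ext i
    simp [div_eq_inv_mul]
  rw [hdiv, mulVec_smul, hcast, ← Pi.single_smul, ← Pi.single_neg]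
  simp [ha]

end Matrix

section StarMatrix

variable {α : Type*} {m : ℕ} {ℓ : Fin m → ℕ}

/-- Row and column `none` belong to the node, `some ⟨j, i⟩` to vertex `i` of the `j`-th chain,
which meets the node at `i = 0`. -/
def starMatrix [Ring α] (s : α) (M : ∀ j, Matrix (Fin (ℓ j + 1)) (Fin (ℓ j + 1)) α) :
    Matrix (Option (Σ j, Fin (ℓ j + 1))) (Option (Σ j, Fin (ℓ j + 1))) α :=
  of fun
    | none, none => -s
    | none, some y => if y.2 = 0 then 1 else 0
    | some x, none => if x.2 = 0 then 1 else 0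
    | some x, some y => blockDiagonal' M x y

def starVec [One α] (x : ∀ j, Fin (ℓ j + 1) → α) : Option (Σ j, Fin (ℓ j + 1)) → α :=
  fun o => o.elim 1 fun y => x y.1 y.2

theorem eq_starMatrix [Ring α] {M : ∀ j, Matrix (Fin (ℓ j + 1)) (Fin (ℓ j + 1)) α} {s : α}
    {N : Matrix (Option (Σ j, Fin (ℓ j + 1))) (Option (Σ j, Fin (ℓ j + 1))) α}
    (h₀ : N none none = -s)
    (h₁ : ∀ j i, N none (some ⟨j, i⟩) = if i = 0 then 1 else 0)
    (h₂ : ∀ j i, N (some ⟨j, i⟩) none = if i = 0 then 1 else 0)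
    (h₃ : ∀ j i i', N (some ⟨j, i⟩) (some ⟨j, i'⟩) = M j i i')
    (h₄ : ∀ j j' i i', j ≠ j' → N (some ⟨j, i⟩) (some ⟨j', i'⟩) = 0) :
    N = starMatrix s M := by
  ext (_ | ⟨j, i⟩) (_ | ⟨j', i'⟩)
  · exact h₀
  · exact h₁ j' i'
  · exact h₂ j i
  · obtain rfl | hj := eq_or_ne j j'
    · simp [starMatrix, h₃]
    · simp [starMatrix, h₄ j j' i i' hj, blockDiagonal'_apply_ne M i i' hj]

theorem starMatrix_map [Ring α] {β : Type*} [Ring β] (f : α →+* β) (s : α)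
    (M : ∀ j, Matrix (Fin (ℓ j + 1)) (Fin (ℓ j + 1)) α) :
    (starMatrix s M).map f = starMatrix (f s) (fun j => (M j).map f) := by
  ext (_ | ⟨j, i⟩) (_ | ⟨j', i'⟩)
  · simp [starMatrix]
  · simp [starMatrix, apply_ite f]
  · simp [starMatrix, apply_ite f]
  · obtain rfl | hj := eq_or_ne j j'
    · simp [starMatrix]
    · simp [starMatrix, blockDiagonal'_apply_ne M i i' hj,
        blockDiagonal'_apply_ne (fun j => (M j).map f) i i' hj]

theorem starMatrix_submatrix_some [Ring α] (s : α)
    (M : ∀ j, Matrix (Fin (ℓ j + 1)) (Fin (ℓ j + 1)) α) :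
    (starMatrix s M).submatrix some some = blockDiagonal' M :=
  rfl

variable [CommRing α] {s : α} {M : ∀ j, Matrix (Fin (ℓ j + 1)) (Fin (ℓ j + 1)) α}
  {x : ∀ j, Fin (ℓ j + 1) → α}

theorem starMatrix_mulVec_starVec (hx : ∀ j, M j *ᵥ x j = -Pi.single 0 1) :
    starMatrix s M *ᵥ starVec x = Pi.single none (∑ j, x j 0 - s) := by
  ext (_ | ⟨j, i⟩)
  · have hcol : ∑ y : Σ j, Fin (ℓ j + 1), (if y.2 = 0 then 1 else 0) * x y.1 y.2 =
        ∑ j, x j 0 := by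
      rw [Fintype.sum_sigma]
      refine Finset.sum_congr rfl fun j _ => ?_
      simp only [ite_mul, one_mul, zero_mul]
      exact Fintype.sum_ite_eq' (0 : Fin (ℓ j + 1)) (x j)
    rw [mulVec, dotProduct, Fintype.sum_option]
    change -s * 1 + ∑ y : Σ j, Fin (ℓ j + 1), (if y.2 = 0 then 1 else 0) * x y.1 y.2 = _
    rw [hcol, Pi.single_eq_same]
    ring
  · have hrow : ∑ y : Σ j, Fin (ℓ j + 1), blockDiagonal' M ⟨j, i⟩ y * x y.1 y.2 =
        (M j *ᵥ x j) i := by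
      rw [Fintype.sum_sigma, Finset.sum_eq_single j]
      · simp [mulVec, dotProduct]
      · intro j' _ hj
        simp [blockDiagonal'_apply_ne M i _ hj.symm]
      · simp
    rw [mulVec, dotProduct, Fintype.sum_option]
    change (if i = 0 then 1 else 0) * 1 + ∑ y : Σ j, Fin (ℓ j + 1),
      blockDiagonal' M ⟨j, i⟩ y * x y.1 y.2 = _
    simp [hrow, hx j, Pi.single_apply]

theorem det_starMatrix (hx : ∀ j, M j *ᵥ x j = -Pi.single 0 1) :
    (starMatrix s M).det = (∑ j, x j 0 - s) * ∏ j, (M j).det := by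
  have h := (starMatrix s M).det_mul_apply_of_mulVec_eq_single (starMatrix_mulVec_starVec hx) none
  rwa [starVec, Option.elim_none, mul_one, adjugate_none_none, mul_comm,
    starMatrix_submatrix_some, det_blockDiagonal'] at h

theorem det_starMatrix_of_det_eq (hx : ∀ j, M j *ᵥ x j = -Pi.single 0 1) {a : Fin m → α}
    (hM : ∀ j, (M j).det = (-1) ^ ℓ j * -a j) :
    (starMatrix s M).det = (-1) ^ Fintype.card (Option (Σ j, Fin (ℓ j + 1))) *
      (∏ j, a j) * (s - ∑ j, x j 0) := by
  have hprod : ∏ j, (M j).det = (-1) ^ (∑ j, (ℓ j + 1)) * ∏ j, a j := by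
    rw [← Finset.prod_pow_eq_pow_sum, ← Finset.prod_mul_distrib]
    exact Finset.prod_congr rfl fun j _ => by rw [hM]; ring
  rw [det_starMatrix hx, hprod, Fintype.card_option, Fintype.card_sigma]
  simp only [Fintype.card_fin]
  ring

theorem sum_lt_of_starMatrix_negDef {K : Type*} [Field K] [LinearOrder K] [IsStrictOrderedRing K]
    {s : K} {M : ∀ j, Matrix (Fin (ℓ j + 1)) (Fin (ℓ j + 1)) K} {x : ∀ j, Fin (ℓ j + 1) → K}
    (hx : ∀ j, M j *ᵥ x j = -Pi.single 0 1)
    (hneg : ∀ v ≠ 0, v ⬝ᵥ starMatrix s M *ᵥ v < 0) :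
    ∑ j, x j 0 < s := by
  have hv : starVec x ≠ 0 := fun h => one_ne_zero (congrFun h none)
  have := hneg _ hv
  rw [starMatrix_mulVec_starVec hx, dotProduct_single] at this
  simpa [starVec] using this

end StarMatrix

theorem Finset.lcm_pos_of_pos {ι : Type*} {s : Finset ι} {a : ι → ℤ} (ha : ∀ j ∈ s, 0 < a j) :
    0 < s.lcm a := by
  refine lt_of_le_of_ne (Int.nonneg_of_normalize_eq_self Finset.normalize_lcm) fun h => ?_
  obtain ⟨j, hj, hj0⟩ := Finset.lcm_eq_zero_iff.mp h.symm
  exact (ha j hj).ne' hj0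

theorem exists_pos_intCast_eq_prod_div_lcm_and_lcm_mul_sub_sum_div {ι : Type*} [Fintype ι]
    {a : ι → ℤ} (ha : ∀ j, 0 < a j) (b : ι → ℤ) {t : ℤ} (h : ∑ j, (b j : ℚ) / a j < t) :
    ∃ D₁ D₂ : ℤ, 0 < D₁ ∧ 0 < D₂ ∧
      (D₁ : ℚ) = (∏ j, (a j : ℚ)) / ((Finset.univ.lcm a : ℤ) : ℚ) ∧
      (D₂ : ℚ) = ((Finset.univ.lcm a : ℤ) : ℚ) * (t - ∑ j, (b j : ℚ) / a j) ∧
      (D₁ : ℚ) * D₂ = (∏ j, (a j : ℚ)) * (t - ∑ j, (b j : ℚ) / a j) := by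
  set L := Finset.univ.lcm a
  have hdvd : ∀ j, a j ∣ L := fun j => Finset.dvd_lcm (Finset.mem_univ j)
  have hL : (0 : ℚ) < L := Int.cast_pos.mpr (Finset.lcm_pos_of_pos fun j _ => ha j)
  have ha' : ∀ j, (a j : ℚ) ≠ 0 := fun j => Int.cast_ne_zero.mpr (ha j).ne'
  have hD₁ : (((∏ j, a j) / L : ℤ) : ℚ) = (∏ j, (a j : ℚ)) / L := by
    rw [Int.cast_div (Finset.lcm_dvd fun j _ => Finset.dvd_prod_of_mem a (Finset.mem_univ j))
      hL.ne', Int.cast_prod]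
  have hD₂ : ((L * t - ∑ j, L / a j * b j : ℤ) : ℚ) = L * (t - ∑ j, (b j : ℚ) / a j) := by
    push_cast
    rw [mul_sub, Finset.mul_sum]
    congr 1
    refine Finset.sum_congr rfl fun j _ => ?_
    rw [Int.cast_div (hdvd j) (ha' j)]
    field_simp
  refine ⟨_, _, ?_, ?_, hD₁, hD₂, ?_⟩
  · rw [← Int.cast_pos (R := ℚ), hD₁]
    exact div_pos (Finset.prod_pos fun j _ => Int.cast_pos.mpr (ha j)) hL
  · rw [← Int.cast_pos (R := ℚ), hD₂]
    exact mul_pos hL (sub_pos.mpr h)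
  · rw [hD₁, hD₂]
    field_simp

theorem star_shaped_det_general
    (m : ℕ)
    (ℓ : Fin m → ℕ)
    (M : ∀ j : Fin m, Matrix (Fin (ℓ j + 1)) (Fin (ℓ j + 1)) ℤ)
    (hMadj : ∀ (j : Fin m) (i i' : Fin (ℓ j + 1)),
      ((i : ℕ) + 1 = (i' : ℕ) ∨ (i' : ℕ) + 1 = (i : ℕ)) → M j i i' = 1)
    (hMoff : ∀ (j : Fin m) (i i' : Fin (ℓ j + 1)),
      i ≠ i' → (i : ℕ) + 1 ≠ (i' : ℕ) → (i' : ℕ) + 1 ≠ (i : ℕ) → M j i i' = 0)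
    (a : Fin m → ℤ) (ha : ∀ j, 1 ≤ a j)
    (R : ∀ j : Fin m, Fin (ℓ j + 1) → ℤ)
    (hRlast : ∀ j, R j (Fin.last (ℓ j)) = 1)
    (hRrel : ∀ j, (M j).mulVec (R j) = fun i => if i = 0 then -(a j) else 0)
    (s₀ : ℤ)
    (N : Matrix (Option ((j : Fin m) × Fin (ℓ j + 1)))
                (Option ((j : Fin m) × Fin (ℓ j + 1))) ℤ)
    (hN₀ : N none none = -s₀)
    (hN₁ : ∀ (j : Fin m) (i : Fin (ℓ j + 1)),
      N none (some ⟨j, i⟩) = if i = 0 then 1 else 0)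
    (hN₂ : ∀ (j : Fin m) (i : Fin (ℓ j + 1)),
      N (some ⟨j, i⟩) none = if i = 0 then 1 else 0)
    (hN₃ : ∀ (j : Fin m) (i i' : Fin (ℓ j + 1)),
      N (some ⟨j, i⟩) (some ⟨j, i'⟩) = M j i i')
    (hN₄ : ∀ (j j' : Fin m) (i : Fin (ℓ j + 1)) (i' : Fin (ℓ j' + 1)),
      j ≠ j' → N (some ⟨j, i⟩) (some ⟨j', i'⟩) = 0)
    (hNdef : ∀ v : Option ((j : Fin m) × Fin (ℓ j + 1)) → ℚ, v ≠ 0 →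
      v ⬝ᵥ (N.map (Int.cast : ℤ → ℚ)).mulVec v < 0) :
    (∑ j, (R j 0 : ℚ) / (a j : ℚ)) < (s₀ : ℚ) ∧
    (N.map (Int.cast : ℤ → ℚ)).det =
      (-1) ^ (Fintype.card (Option ((j : Fin m) × Fin (ℓ j + 1)))) *
        (∏ j, (a j : ℚ)) * ((s₀ : ℚ) - ∑ j, (R j 0 : ℚ) / (a j : ℚ)) ∧
    ∃ D₁ D₂ : ℤ, 0 < D₁ ∧ 0 < D₂ ∧
      (D₁ : ℚ) = (∏ j, (a j : ℚ)) / ((Finset.univ.lcm a : ℤ) : ℚ) ∧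
      (D₂ : ℚ) = ((Finset.univ.lcm a : ℤ) : ℚ) *
        ((s₀ : ℚ) - ∑ j, (R j 0 : ℚ) / (a j : ℚ)) ∧
      |N.det| = D₁ * D₂ := by
  have ha₀ : ∀ j, 0 < a j := fun j => one_pos.trans_le (ha j)
  have hR : ∀ j, M j *ᵥ R j = Pi.single 0 (-a j) := fun j => by
    rw [hRrel j]; ext i; simp [Pi.single_apply]
  have hx : ∀ j, (M j).map (Int.cast : ℤ → ℚ) *ᵥ (fun i => (R j i : ℚ) / a j) =
      -Pi.single 0 1 := fun j => map_intCast_mulVec_div_eq (hR j) (ha₀ j).ne'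
  have hdetM : ∀ j, ((M j).map (Int.cast : ℤ → ℚ)).det = (-1) ^ ℓ j * -(a j : ℚ) := fun j => by
    rw [← Int.cast_det, det_eq_of_hessenberg_of_mulVec_eq_single (M j)
      (fun i => hMadj j _ _ (Or.inr (by simp)))
      (fun i i' hi => hMoff j i i' (Fin.ne_of_val_ne (by omega)) (by omega) (by omega))
      (hRlast j) (hR j)]
    push_cast; ring
  have hNstar : N.map (Int.cast : ℤ → ℚ) = starMatrix (s₀ : ℚ) fun j => (M j).map Int.cast := by
    rw [eq_starMatrix hN₀ hN₁ hN₂ hN₃ hN₄]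
    exact starMatrix_map (Int.castRingHom ℚ) s₀ M
  have hlt := sum_lt_of_starMatrix_negDef hx (hNstar ▸ hNdef)
  have hdet := hNstar ▸ det_starMatrix_of_det_eq (s := (s₀ : ℚ)) hx hdetM
  obtain ⟨D₁, D₂, hD₁, hD₂, hD₁q, hD₂q, hD₁D₂⟩ :=
    exists_pos_intCast_eq_prod_div_lcm_and_lcm_mul_sub_sum_div ha₀ (fun j => R j 0) hlt
  refine ⟨hlt, hdet, D₁, D₂, hD₁, hD₂, hD₁q, hD₂q, ?_⟩
  have hdetZ : N.det = (-1) ^ Fintype.card (Option ((j : Fin m) × Fin (ℓ j + 1))) * (D₁ * D₂) := by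
    have : ((N.det : ℤ) : ℚ) = _ := (Int.cast_det N).trans hdet
    rw [mul_assoc, ← hD₁D₂] at this
    exact_mod_cast this
  rw [hdetZ, abs_mul, abs_pow, abs_neg, abs_one, one_pow, one_mul, abs_of_pos (mul_pos hD₁ hD₂)]

/-- **Star-shaped intersection matrices: determinant formula.**
Let `N = N(s₀ | a₁/b₁, …, a_m/b_m)` be an `n×n` star-shaped intersection matrix built from an
integer `s₀ ≥ 1` and `m ≥ 3` Hirzebruch–Jung chain matrices `N₁, …, N_m` with associated data
`(a_j, b_j, R_j)` (here `b j = R j 0`).  Then `s₀ > Σ b_j/a_j`,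
`det N = (−1)^n (Π a_j)(s₀ − Σ b_j/a_j)`, and `|det N|` factors as the product of the two
positive integers `(Π a_j)/lcm(a_j)` and `lcm(a_j)·(s₀ − Σ b_j/a_j)`. -/
theorem star_shaped_det
    (m : ℕ) (hm : 3 ≤ m)
    (ℓ : Fin m → ℕ)
    (M : ∀ j : Fin m, Matrix (Fin (ℓ j + 1)) (Fin (ℓ j + 1)) ℤ)
    (hMdiag : ∀ j i, M j i i ≤ -2)
    (hMadj : ∀ (j : Fin m) (i i' : Fin (ℓ j + 1)),
      ((i : ℕ) + 1 = (i' : ℕ) ∨ (i' : ℕ) + 1 = (i : ℕ)) → M j i i' = 1)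
    (hMoff : ∀ (j : Fin m) (i i' : Fin (ℓ j + 1)),
      i ≠ i' → (i : ℕ) + 1 ≠ (i' : ℕ) → (i' : ℕ) + 1 ≠ (i : ℕ) → M j i i' = 0)
    (a : Fin m → ℤ) (ha : ∀ j, 1 ≤ a j)
    (R : ∀ j : Fin m, Fin (ℓ j + 1) → ℤ)
    (hRpos : ∀ j i, 0 < R j i)
    (hRlast : ∀ j, R j (Fin.last (ℓ j)) = 1)
    (hRrel : ∀ j, (M j).mulVec (R j) = fun i => if i = 0 then -(a j) else 0)
    (s₀ : ℤ) (hs₀ : 1 ≤ s₀)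
    (N : Matrix (Option ((j : Fin m) × Fin (ℓ j + 1)))
                (Option ((j : Fin m) × Fin (ℓ j + 1))) ℤ)
    (hN₀ : N none none = -s₀)
    (hN₁ : ∀ (j : Fin m) (i : Fin (ℓ j + 1)),
      N none (some ⟨j, i⟩) = if i = 0 then 1 else 0)
    (hN₂ : ∀ (j : Fin m) (i : Fin (ℓ j + 1)),
      N (some ⟨j, i⟩) none = if i = 0 then 1 else 0)
    (hN₃ : ∀ (j : Fin m) (i i' : Fin (ℓ j + 1)),
      N (some ⟨j, i⟩) (some ⟨j, i'⟩) = M j i i')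
    (hN₄ : ∀ (j j' : Fin m) (i : Fin (ℓ j + 1)) (i' : Fin (ℓ j' + 1)),
      j ≠ j' → N (some ⟨j, i⟩) (some ⟨j', i'⟩) = 0)
    (hNdef : ∀ v : Option ((j : Fin m) × Fin (ℓ j + 1)) → ℚ, v ≠ 0 →
      v ⬝ᵥ (N.map (Int.cast : ℤ → ℚ)).mulVec v < 0) :
    (∑ j, (R j 0 : ℚ) / (a j : ℚ)) < (s₀ : ℚ) ∧
    (N.map (Int.cast : ℤ → ℚ)).det =
      (-1) ^ (Fintype.card (Option ((j : Fin m) × Fin (ℓ j + 1)))) *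
        (∏ j, (a j : ℚ)) * ((s₀ : ℚ) - ∑ j, (R j 0 : ℚ) / (a j : ℚ)) ∧
    ∃ D₁ D₂ : ℤ, 0 < D₁ ∧ 0 < D₂ ∧
      (D₁ : ℚ) = (∏ j, (a j : ℚ)) / ((Finset.univ.lcm a : ℤ) : ℚ) ∧
      (D₂ : ℚ) = ((Finset.univ.lcm a : ℤ) : ℚ) *
        ((s₀ : ℚ) - ∑ j, (R j 0 : ℚ) / (a j : ℚ)) ∧
      |N.det| = D₁ * D₂ :=
  star_shaped_det_general m ℓ M hMadj hMoff a ha R hRlast hRrel s₀ N hN₀ hN₁ hN₂ hN₃ hN₄ hNdef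
end

section
/- Let N = N(s_0 | a_1/b_1, …, a_m/b_m) be an n×n star-shaped intersection matrix built from an integer s_0 ≥ 1 and m ≥ 3 Hirzebruch–Jung chain matrices N_1, …, N_m with associated data (a_j, b_j, R_j). Then in the discriminant group Φ_N = ℤ^n/Nℤ^n, the class of the standard basis vector e_{v_0} corresponding to the central node v_0 has order exactly lcm(a_1,…,a_m)·(s_0 − Σ_{j=1}^m b_j/a_j) (which is a positive integer). -/
open Matrix BigOperators

/-- **Star-shaped intersection matrices: order of the node class.**
In the discriminant group `Φ_N = ℤ^n/Nℤ^n` of the star-shaped intersection matrix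
`N = N(s₀ | a₁/b₁, …, a_m/b_m)`, the class of the standard basis vector corresponding to the
central node has order exactly `lcm(a₁,…,a_m)·(s₀ − Σ b_j/a_j)`, a positive integer. -/
theorem star_shaped_node_order
    (m : ℕ) (hm : 3 ≤ m)
    (ℓ : Fin m → ℕ)
    (M : ∀ j : Fin m, Matrix (Fin (ℓ j + 1)) (Fin (ℓ j + 1)) ℤ)
    (hMdiag : ∀ j i, M j i i ≤ -2)
    (hMadj : ∀ (j : Fin m) (i i' : Fin (ℓ j + 1)),
      ((i : ℕ) + 1 = (i' : ℕ) ∨ (i' : ℕ) + 1 = (i : ℕ)) → M j i i' = 1)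
    (hMoff : ∀ (j : Fin m) (i i' : Fin (ℓ j + 1)),
      i ≠ i' → (i : ℕ) + 1 ≠ (i' : ℕ) → (i' : ℕ) + 1 ≠ (i : ℕ) → M j i i' = 0)
    (a : Fin m → ℤ) (ha : ∀ j, 1 ≤ a j)
    (R : ∀ j : Fin m, Fin (ℓ j + 1) → ℤ)
    (hRpos : ∀ j i, 0 < R j i)
    (hRlast : ∀ j, R j (Fin.last (ℓ j)) = 1)
    (hRrel : ∀ j, (M j).mulVec (R j) = fun i => if i = 0 then -(a j) else 0)
    (s₀ : ℤ) (hs₀ : 1 ≤ s₀)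
    (N : Matrix (Option ((j : Fin m) × Fin (ℓ j + 1)))
                (Option ((j : Fin m) × Fin (ℓ j + 1))) ℤ)
    (hN₀ : N none none = -s₀)
    (hN₁ : ∀ (j : Fin m) (i : Fin (ℓ j + 1)),
      N none (some ⟨j, i⟩) = if i = 0 then 1 else 0)
    (hN₂ : ∀ (j : Fin m) (i : Fin (ℓ j + 1)),
      N (some ⟨j, i⟩) none = if i = 0 then 1 else 0)
    (hN₃ : ∀ (j : Fin m) (i i' : Fin (ℓ j + 1)),
      N (some ⟨j, i⟩) (some ⟨j, i'⟩) = M j i i')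
    (hN₄ : ∀ (j j' : Fin m) (i : Fin (ℓ j + 1)) (i' : Fin (ℓ j' + 1)),
      j ≠ j' → N (some ⟨j, i⟩) (some ⟨j', i'⟩) = 0)
    (hNdef : ∀ v : Option ((j : Fin m) × Fin (ℓ j + 1)) → ℚ, v ≠ 0 →
      v ⬝ᵥ (N.map (Int.cast : ℤ → ℚ)).mulVec v < 0) :
    ∃ d : ℕ, 0 < d ∧
      (d : ℚ) = ((Finset.univ.lcm a : ℤ) : ℚ) *
        ((s₀ : ℚ) - ∑ j, (R j 0 : ℚ) / (a j : ℚ)) ∧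
      addOrderOf
        (Submodule.Quotient.mk
            (Pi.single (none : Option ((j : Fin m) × Fin (ℓ j + 1))) (1 : ℤ)) :
          (Option ((j : Fin m) × Fin (ℓ j + 1)) → ℤ) ⧸ LinearMap.range N.mulVecLin) = d := by
  classical
  set L : ℤ := Finset.univ.lcm a with hLdef
  have haN : ∀ j, a j ≠ 0 := fun j => by have := ha j; omega
  have haL : ∀ j, a j ∣ L := fun j => Finset.dvd_lcm (Finset.mem_univ j)
  have hLne : L ≠ 0 := by
    rw [hLdef, Ne, Finset.lcm_eq_zero_iff]
    rintro ⟨j, -, hj⟩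
    exact haN j hj
  have hLpos : 0 < L :=
    lt_of_le_of_ne (Int.nonneg_of_normalize_eq_self Finset.normalize_lcm) (Ne.symm hLne)
  have hdivL : ∀ j, L / a j * a j = L := fun j => Int.ediv_mul_cancel (haL j)
  -- the magic vector
  set v : Option ((j : Fin m) × Fin (ℓ j + 1)) → ℤ := fun x => x.elim L (fun σ => (L / a σ.1) * R σ.1 σ.2) with hv
  set d' : ℤ := s₀ * L - ∑ j, (L / a j) * R j 0 with hd'
  -- unfold mulVec over the Option/Sigma index
  have hmv : ∀ (A : Matrix (Option ((j : Fin m) × Fin (ℓ j + 1))) (Option ((j : Fin m) × Fin (ℓ j + 1))) ℤ) (w : Option ((j : Fin m) × Fin (ℓ j + 1)) → ℤ) (x : Option ((j : Fin m) × Fin (ℓ j + 1))),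
      A.mulVec w x = A x none * w none + ∑ j, ∑ i, A x (some ⟨j, i⟩) * w (some ⟨j, i⟩) := by
    intro A w x
    rw [Matrix.mulVec, dotProduct, Fintype.sum_option, ← Finset.univ_sigma_univ,
      Finset.sum_sigma]
  have hmvM : ∀ (j : Fin m) (u : Fin (ℓ j + 1) → ℤ) (i : Fin (ℓ j + 1)),
      (M j).mulVec u i = ∑ i', M j i i' * u i' := by
    intro j u i; rfl
  -- N ·ᵥ v = -d' · e₀
  have hNv : ∀ x, N.mulVec v x = if x = none then -d' else 0 := by
    intro x
    rw [hmv]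
    match x with
    | none =>
      rw [if_pos rfl]
      simp only [hN₀, hN₁]
      have : ∀ j : Fin m, ∑ i, (if i = 0 then (1:ℤ) else 0) * v (some ⟨j, i⟩)
          = (L / a j) * R j 0 := by
        intro j
        rw [Finset.sum_eq_single 0]
        · simp [hv]
        · intro i _ hi; simp [hi]
        · simp
      rw [Finset.sum_congr rfl fun j _ => this j]
      have hvn : v none = L := rfl
      rw [hvn, hd']
      ring
    | some ⟨j, i⟩ =>
      have hinner : ∀ j' : Fin m, ∑ i', N (some ⟨j, i⟩) (some ⟨j', i'⟩) * v (some ⟨j', i'⟩)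
          = if j' = j then (L / a j) * ((M j).mulVec (R j) i) else 0 := by
        intro j'
        by_cases h : j' = j
        · subst h
          rw [if_pos rfl, hmvM, Finset.mul_sum]
          refine Finset.sum_congr rfl fun i' _ => ?_
          rw [hN₃]
          simp only [hv, Option.elim]
          ring
        · rw [if_neg h]
          refine Finset.sum_eq_zero fun i' _ => ?_
          rw [hN₄ j j' i i' (fun hh => h hh.symm), zero_mul]
      rw [Finset.sum_congr rfl fun j' _ => hinner j']
      rw [Finset.sum_ite_eq' Finset.univ j (fun _ => (L / a j) * ((M j).mulVec (R j) i))]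
      have hvn : v none = L := rfl
      rw [hN₂, hRrel j, hvn]
      simp only [Finset.mem_univ, if_true, reduceCtorEq, if_false]
      show (if i = 0 then (1:ℤ) else 0) * L + L / a j * (if i = 0 then -(a j) else 0) = 0
      by_cases hi : i = 0
      · rw [if_pos hi, if_pos hi, one_mul, mul_neg, hdivL j, add_neg_cancel]
      · rw [if_neg hi, if_neg hi, zero_mul, mul_zero, add_zero]
  -- d' is positive, via negative definiteness
  have hvQne : (fun x => ((v x : ℚ))) ≠ 0 := by
    intro h
    have := congrFun h none
    simp only [hv, Option.elim, Pi.zero_apply, Int.cast_eq_zero] at this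
    exact hLne this
  have hquad : ∀ w : Option ((j : Fin m) × Fin (ℓ j + 1)) → ℤ,
      (fun x => ((w x : ℚ))) ⬝ᵥ (N.map (Int.cast : ℤ → ℚ)).mulVec (fun x => ((w x : ℚ)))
        = ((w ⬝ᵥ N.mulVec w : ℤ) : ℚ) := by
    intro w
    have h1 : (fun x => ((w x : ℚ))) = (Int.castRingHom ℚ) ∘ w := rfl
    have h2 : (N.map (Int.cast : ℤ → ℚ)).mulVec ((Int.castRingHom ℚ) ∘ w)
        = (Int.castRingHom ℚ) ∘ (N.mulVec w) := by
      funext x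
      exact ((Int.castRingHom ℚ).map_mulVec N w x).symm
    rw [h1, h2, ← RingHom.map_dotProduct]
    rfl
  have hd'pos : 0 < d' := by
    have hneg := hNdef (fun x => ((v x : ℚ))) hvQne
    rw [hquad v] at hneg
    have h1 : v ⬝ᵥ N.mulVec v = L * (-d') := by
      rw [dotProduct, Fintype.sum_option]
      have : ∀ σ : ((j : Fin m) × Fin (ℓ j + 1)), v (some σ) * N.mulVec v (some σ) = 0 := by
        intro σ
        rw [hNv]
        simp
      rw [Finset.sum_congr rfl fun σ _ => this σ, Finset.sum_const_zero, add_zero,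
        hNv, if_pos rfl]
      rfl
    rw [h1] at hneg
    have hneg' : L * -d' < 0 := by exact_mod_cast hneg
    nlinarith [hLpos]
  -- injectivity of the chains, via negative definiteness
  have hinj : ∀ (j : Fin m) (u : Fin (ℓ j + 1) → ℤ), (M j).mulVec u = 0 → u = 0 := by
    intro j u hu
    by_contra hune
    set w : Option ((j : Fin m) × Fin (ℓ j + 1)) → ℤ := fun x => x.elim 0
      (fun σ => if h : σ.1 = j then u (Fin.cast (by rw [h]) σ.2) else 0) with hw
    have hw_some : ∀ i : Fin (ℓ j + 1), w (some ⟨j, i⟩) = u i := by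
      intro i
      have hh : w (some ⟨j, i⟩) = if h : j = j then u (Fin.cast (by rw [h]) i) else 0 := rfl
      rw [hh, dif_pos rfl]
      exact congrArg u (Fin.ext (Fin.coe_cast _ _))
    have hwQne : (fun x => ((w x : ℚ))) ≠ 0 := by
      intro h
      apply hune
      funext i
      have := congrFun h (some ⟨j, i⟩)
      simp only [Pi.zero_apply, Int.cast_eq_zero] at this
      rw [hw_some] at this
      simp [this]
    have hrowz : ∀ i : Fin (ℓ j + 1), N.mulVec w (some ⟨j, i⟩) = 0 := by
      intro i
      rw [hmv]
      have hnone : w none = 0 := rfl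
      rw [hnone, mul_zero, zero_add]
      have hinner : ∀ j' : Fin m, ∑ i', N (some ⟨j, i⟩) (some ⟨j', i'⟩) * w (some ⟨j', i'⟩)
          = if j' = j then (M j).mulVec u i else 0 := by
        intro j'
        by_cases h : j' = j
        · subst h
          rw [if_pos rfl, hmvM]
          refine Finset.sum_congr rfl fun i' _ => ?_
          rw [hN₃, hw_some]
        · rw [if_neg h]
          refine Finset.sum_eq_zero fun i' _ => ?_
          rw [hN₄ j j' i i' (fun hh => h hh.symm), zero_mul]
      rw [Finset.sum_congr rfl fun j' _ => hinner j',
        Finset.sum_ite_eq' Finset.univ j (fun _ => (M j).mulVec u i)]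
      simp [hu]
    have hq0 : w ⬝ᵥ N.mulVec w = 0 := by
      rw [dotProduct, Fintype.sum_option]
      have h0 : w none * N.mulVec w none = 0 := by
        simp [show w none = 0 from rfl]
      rw [h0, zero_add]
      refine Finset.sum_eq_zero fun σ _ => ?_
      obtain ⟨j', i'⟩ := σ
      by_cases h : j' = j
      · subst h
        rw [hrowz, mul_zero]
      · have : w (some ⟨j', i'⟩) = 0 := by simp [hw, Option.elim, h]
        rw [this, zero_mul]
    have := hNdef (fun x => ((w x : ℚ))) hwQne
    rw [hquad w, hq0] at this
    norm_num at this
  -- the key characterization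
  have hkey : ∀ k : ℤ, (∃ y, N.mulVec y = fun x => if x = none then k else 0) ↔ d' ∣ k := by
    intro k
    constructor
    · rintro ⟨y, hy⟩
      have hrow : ∀ (j : Fin m) (i : Fin (ℓ j + 1)),
          (if i = 0 then y none else 0) + (M j).mulVec (fun i' => y (some ⟨j, i'⟩)) i = 0 := by
        intro j i
        have h0 := congrFun hy (some ⟨j, i⟩)
        rw [hmv] at h0
        simp only [reduceCtorEq, if_false] at h0
        have hinner : ∀ j' : Fin m, ∑ i', N (some ⟨j, i⟩) (some ⟨j', i'⟩) * y (some ⟨j', i'⟩)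
            = if j' = j then (M j).mulVec (fun i' => y (some ⟨j, i'⟩)) i else 0 := by
          intro j'
          by_cases h : j' = j
          · subst h
            rw [if_pos rfl, hmvM]
            exact Finset.sum_congr rfl fun i' _ => by rw [hN₃]
          · rw [if_neg h]
            refine Finset.sum_eq_zero fun i' _ => ?_
            rw [hN₄ j j' i i' (fun hh => h hh.symm), zero_mul]
        rw [Finset.sum_congr rfl fun j' _ => hinner j',
          Finset.sum_ite_eq' Finset.univ j
            (fun _ => (M j).mulVec (fun i' => y (some ⟨j, i'⟩)) i), hN₂] at h0
        simp only [Finset.mem_univ, if_true] at h0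
        by_cases hi : i = 0
        · rw [if_pos hi] at h0 ⊢
          linarith
        · rw [if_neg hi] at h0 ⊢
          linarith
      have hsolve : ∀ (j : Fin m) (i : Fin (ℓ j + 1)),
          a j * y (some ⟨j, i⟩) = y none * R j i := by
        intro j i
        have hz : (M j).mulVec (a j • (fun i' => y (some ⟨j, i'⟩)) - y none • R j) = 0 := by
          rw [Matrix.mulVec_sub, Matrix.mulVec_smul, Matrix.mulVec_smul, hRrel j]
          funext i'
          have h1 := hrow j i'
          simp only [Pi.sub_apply, Pi.smul_apply, smul_eq_mul, Pi.zero_apply]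
          by_cases hi : i' = 0
          · have h2 : (M j).mulVec (fun i'' => y (some ⟨j, i''⟩)) i' = -(y none) := by
              rw [if_pos hi] at h1; linarith
            rw [h2, if_pos hi]; ring
          · have h2 : (M j).mulVec (fun i'' => y (some ⟨j, i''⟩)) i' = 0 := by
              rw [if_neg hi] at h1; linarith
            rw [h2, if_neg hi]; ring
        have := congrFun (hinj j _ hz) i
        simp only [Pi.sub_apply, Pi.smul_apply, smul_eq_mul, Pi.zero_apply] at this
        linarith
      have hdvd : ∀ j : Fin m, a j ∣ y none := by
        intro j
        refine ⟨y (some ⟨j, Fin.last (ℓ j)⟩), ?_⟩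
        have := hsolve j (Fin.last (ℓ j))
        rw [hRlast j, mul_one] at this
        omega
      obtain ⟨t, ht⟩ : L ∣ y none := Finset.lcm_dvd fun j _ => hdvd j
      have hyv : y = t • v := by
        funext x
        match x with
        | none => simpa [hv, mul_comm] using ht
        | some ⟨j, i⟩ =>
          have h1 := hsolve j i
          rw [ht] at h1
          have h2 : a j * (t • v) (some ⟨j, i⟩) = L * t * R j i := by
            simp only [Pi.smul_apply, smul_eq_mul, hv, Option.elim]
            rw [show a j * (t * (L / a j * R j i)) = (L / a j * a j) * t * R j i by ring,
              hdivL j]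
          exact mul_left_cancel₀ (haN j) (h1.trans h2.symm)
      have hk : k = t * (-d') := by
        have := congrFun hy none
        rw [if_pos rfl] at this
        rw [← this, hyv, Matrix.mulVec_smul, Pi.smul_apply, hNv, if_pos rfl, smul_eq_mul]
      exact ⟨-t, by rw [hk]; ring⟩
    · rintro ⟨t, rfl⟩
      refine ⟨(-t) • v, ?_⟩
      funext x
      rw [Matrix.mulVec_smul, Pi.smul_apply, hNv, smul_eq_mul]
      by_cases hx : x = none <;> simp [hx] <;> ring
  -- conclude
  refine ⟨d'.toNat, by omega, ?_, ?_⟩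
  · have htn : ((d'.toNat : ℤ) : ℚ) = (d' : ℚ) := by
      rw [Int.toNat_of_nonneg hd'pos.le]
    rw [show ((d'.toNat : ℚ)) = ((d'.toNat : ℤ) : ℚ) by push_cast; ring, htn, hd']
    push_cast
    rw [mul_sub]
    congr 1
    · ring
    · rw [Finset.mul_sum]
      refine Finset.sum_congr rfl fun j _ => ?_
      have haQ : (a j : ℚ) ≠ 0 := Int.cast_ne_zero.mpr (haN j)
      have : ((L / a j : ℤ) : ℚ) = (L : ℚ) / (a j : ℚ) := by
        rw [eq_div_iff haQ, ← Int.cast_mul, hdivL j]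
      rw [this]
      field_simp
  · set e : Option ((j : Fin m) × Fin (ℓ j + 1)) → ℤ := Pi.single none 1 with he
    set q : (Option ((j : Fin m) × Fin (ℓ j + 1)) → ℤ) ⧸ LinearMap.range N.mulVecLin := Submodule.Quotient.mk e with hq
    have hsmul : ∀ k : ℤ, (k • q = 0 ↔ d' ∣ k) := by
      intro k
      rw [hq, ← Submodule.Quotient.mk_smul, Submodule.Quotient.mk_eq_zero]
      have hke : k • e = fun x => if x = none then k else 0 := by
        funext x
        simp [he, Pi.single_apply]
      rw [hke]
      rw [← hkey k]
      constructor
      · rintro ⟨y, hy⟩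
        exact ⟨y, by rw [← hy]; simp [Matrix.mulVecLin_apply]⟩
      · rintro ⟨y, hy⟩
        exact ⟨y, by rw [Matrix.mulVecLin_apply, hy]⟩
    rw [addOrderOf_eq_iff (by omega)]
    constructor
    · have : (d'.toNat : ℤ) • q = 0 := (hsmul _).mpr ⟨1, by rw [Int.toNat_of_nonneg hd'pos.le]; ring⟩
      rwa [natCast_zsmul] at this
    · intro k hk hkpos hk0
      have : (k : ℤ) • q = 0 := by rwa [natCast_zsmul]
      have hdvd := (hsmul _).mp this
      have := Int.le_of_dvd (by exact_mod_cast hkpos) hdvd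
      omega
end

section
/- Let N = N(s_0 | a_1/b_1, …, a_m/b_m) be an n×n star-shaped intersection matrix built from an integer s_0 ≥ 1 and m ≥ 3 Hirzebruch–Jung chain matrices N_1, …, N_m with associated data (a_j, b_j, R_j). Let w_j denote the terminal vertex of the j-th chain. Then: (1) the discriminant group Φ_N is generated by the classes of e_{w_1}, …, e_{w_m}; (2) for each j the class of e_{v_0} equals the class of a_j·e_{w_j} in Φ_N; and (3) the group Φ_N is killed by lcm(a_1,…,a_m)^2·(s_0 − Σ_{j=1}^m b_j/a_j). -/
open Matrix BigOperators

/-!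
Every column of `N` gives a relation in `Φ_N`. Along the `j`-th chain these relations are the
recurrence `M_j R_j = -a_j e_0` satisfied by `R_j`, read downwards from the terminal vertex `w_j`;
hence `e_i ≡ R_j(i) • e_{w_j}` on the whole chain, and the column of its first vertex gives
`e_{v₀} ≡ a_j • e_{w_j}`. The node's column gives `s₀ • e_{v₀} ≡ ∑_j b_j • e_{w_j}`; with
`L = lcm a_j = a_j q_j` this becomes `(L s₀ - ∑_j q_j b_j) • e_{v₀} = 0`, and since `L • e_{w_j}` is
the multiple `q_j • e_{v₀}`, the integer `L (L s₀ - ∑_j q_j b_j) = L² (s₀ - ∑_j b_j / a_j)` kills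
every generator.
-/

namespace Matrix

variable {ι : Type*} [Fintype ι]

theorem mulVec_apply_smul {κ A : Type*} [AddCommGroup A] (M : Matrix κ ι ℤ) (R : ι → ℤ) (c : κ)
    (y : A) : (M *ᵥ R) c • y = ∑ i, M c i • R i • y := by
  simp only [mulVec, dotProduct, Finset.sum_smul, mul_smul]

variable [DecidableEq ι]

abbrev DiscriminantGroup (N : Matrix ι ι ℤ) : Type _ := (ι → ℤ) ⧸ LinearMap.range N.mulVecLin

def vertexClass (N : Matrix ι ι ℤ) (v : ι) : N.DiscriminantGroup :=
  Submodule.Quotient.mk (Pi.single v 1)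

theorem span_range_vertexClass (N : Matrix ι ι ℤ) :
    Submodule.span ℤ (Set.range N.vertexClass) = ⊤ := by
  have : N.vertexClass = (LinearMap.range N.mulVecLin).mkQ ∘ Pi.basisFun ℤ ι := by
    ext v; simp [vertexClass]
  rw [this, Set.range_comp, ← Submodule.map_span, (Pi.basisFun ℤ ι).span_eq, Submodule.map_top,
    Submodule.range_mkQ]

theorem sum_smul_vertexClass (N : Matrix ι ι ℤ) (w : ι) :
    ∑ v, N v w • N.vertexClass v = 0 := by
  have hcol : ∑ v, N v w • Pi.single v (1 : ℤ) = N.mulVecLin (Pi.single w 1) := by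
    rw [mulVecLin_apply, mulVec_single_one, ← Finset.univ_sum_single (N.col w)]
    simp [← Pi.single_smul]
  calc ∑ v, N v w • N.vertexClass v
      = (LinearMap.range N.mulVecLin).mkQ (∑ v, N v w • Pi.single v (1 : ℤ)) := by
        simp only [vertexClass, map_sum, map_zsmul, Submodule.mkQ_apply]
    _ = 0 := by
        rw [hcol, Submodule.mkQ_apply, Submodule.Quotient.mk_eq_zero]
        exact LinearMap.mem_range_self _ _

structure IsChainShaped {n : ℕ} (M : Matrix (Fin (n + 1)) (Fin (n + 1)) ℤ) : Prop where
  adj : ∀ i i' : Fin (n + 1), ((i : ℕ) + 1 = i' ∨ (i' : ℕ) + 1 = i) → M i i' = 1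
  off : ∀ i i' : Fin (n + 1), i ≠ i' → (i : ℕ) + 1 ≠ i' → (i' : ℕ) + 1 ≠ i → M i i' = 0

namespace IsChainShaped

variable {n : ℕ} {M : Matrix (Fin (n + 1)) (Fin (n + 1)) ℤ} {A : Type*} [AddCommGroup A]

theorem isSymm (hM : M.IsChainShaped) : M.IsSymm := by
  refine IsSymm.ext fun i i' => ?_
  rcases eq_or_ne i i' with rfl | hne
  · rfl
  by_cases h : (i : ℕ) + 1 = i' ∨ (i' : ℕ) + 1 = i
  · rw [hM.adj i i' h, hM.adj i' i h.symm]
  · rw [not_or] at h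
    rw [hM.off i i' hne h.1 h.2, hM.off i' i hne.symm h.2 h.1]

/-- Row `c + 1` expresses the entry at `c` through the entries above it, so a solution vanishing
at the last vertex vanishes everywhere. -/
theorem eq_zero_of_last_eq_zero (hM : M.IsChainShaped) {D : Fin (n + 1) → A}
    (hlast : D (Fin.last n) = 0) (hrow : ∀ c ≠ 0, ∑ i, M c i • D i = 0) : D = 0 := by
  suffices h : ∀ i i' : Fin (n + 1), i ≤ i' → D i' = 0 from funext fun i => h i i le_rfl
  intro i
  induction i using Fin.reverseInduction with
  | last => intro i' hi'; rw [Fin.last_le_iff.mp hi', hlast]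
  | cast i ih =>
    intro i' hi'
    rcases hi'.eq_or_lt with rfl | hlt
    · have hrow_succ := hrow i.succ (Fin.succ_ne_zero i)
      rwa [Finset.sum_eq_single (Fin.castSucc i), hM.adj _ _ (Or.inr (by simp)), one_smul]
        at hrow_succ
      · intro b _ hb
        rcases lt_or_gt_of_ne hb with hb | hb
        · rw [Fin.lt_def, Fin.val_castSucc] at hb
          rw [hM.off _ _ (by simp [Fin.ext_iff]; omega) (by simp; omega) (by simp; omega),
            zero_smul]
        · rw [ih b (Fin.castSucc_lt_iff_succ_le.mp hb), smul_zero]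
      · simp
    · exact ih i' (Fin.castSucc_lt_iff_succ_le.mp hlt)

theorem eq_smul_last (hM : M.IsChainShaped) {x : Fin (n + 1) → A}
    (hx : ∀ c ≠ 0, ∑ i, M c i • x i = 0) {R : Fin (n + 1) → ℤ} (hR : ∀ c ≠ 0, (M *ᵥ R) c = 0)
    (hRlast : R (Fin.last n) = 1) (i : Fin (n + 1)) : x i = R i • x (Fin.last n) := by
  have hD := hM.eq_zero_of_last_eq_zero (D := fun i => x i - R i • x (Fin.last n))
    (by simp [hRlast]) fun c hc => by
      simp only [smul_sub, Finset.sum_sub_distrib, ← mulVec_apply_smul, hx c hc, hR c hc,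
        zero_smul, sub_zero]
  exact sub_eq_zero.mp (congrFun hD i)

end IsChainShaped

abbrev StarVertex {m : ℕ} (ℓ : Fin m → ℕ) : Type := Option ((j : Fin m) × Fin (ℓ j + 1))

/-- The node `v₀` of `N(s₀ | …)` is `none`; the `j`-th chain occupies the vertices `some ⟨j, i⟩`,
and `w_j` is `some ⟨j, Fin.last (ℓ j)⟩`. -/
structure IsStarShaped {m : ℕ} {ℓ : Fin m → ℕ} (N : Matrix (StarVertex ℓ) (StarVertex ℓ) ℤ)
    (s₀ : ℤ) (M : ∀ j : Fin m, Matrix (Fin (ℓ j + 1)) (Fin (ℓ j + 1)) ℤ) : Prop where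
  node_node : N none none = -s₀
  node_chain : ∀ (j : Fin m) (i : Fin (ℓ j + 1)), N none (some ⟨j, i⟩) = if i = 0 then 1 else 0
  chain_node : ∀ (j : Fin m) (i : Fin (ℓ j + 1)), N (some ⟨j, i⟩) none = if i = 0 then 1 else 0
  chain_chain : ∀ (j : Fin m) (i i' : Fin (ℓ j + 1)), N (some ⟨j, i⟩) (some ⟨j, i'⟩) = M j i i'
  chain_ne : ∀ (j j' : Fin m) (i : Fin (ℓ j + 1)) (i' : Fin (ℓ j' + 1)),
    j ≠ j' → N (some ⟨j, i⟩) (some ⟨j', i'⟩) = 0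

namespace IsStarShaped

variable {m : ℕ} {ℓ : Fin m → ℕ} {N : Matrix (StarVertex ℓ) (StarVertex ℓ) ℤ} {s₀ : ℤ}
  {M : ∀ j : Fin m, Matrix (Fin (ℓ j + 1)) (Fin (ℓ j + 1)) ℤ}

theorem smul_vertexClass_node (hN : N.IsStarShaped s₀ M) :
    s₀ • N.vertexClass none = ∑ j, N.vertexClass (some ⟨j, 0⟩) := by
  have hchain (j : Fin m) :
      ∑ i, N (some ⟨j, i⟩) none • N.vertexClass (some ⟨j, i⟩) = N.vertexClass (some ⟨j, 0⟩) := by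
    simp [hN.chain_node]
  have h := N.sum_smul_vertexClass none
  rw [Fintype.sum_option, Fintype.sum_sigma, hN.node_node, Finset.sum_congr rfl fun j _ => hchain j,
    neg_smul, neg_add_eq_zero] at h
  exact h

theorem vertexClass_chain_relation (hN : N.IsStarShaped s₀ M) (hM : ∀ j, (M j).IsSymm)
    (j : Fin m) (c : Fin (ℓ j + 1)) :
    (if c = 0 then N.vertexClass none else 0) + ∑ i, M j c i • N.vertexClass (some ⟨j, i⟩) = 0 := by
  have h := N.sum_smul_vertexClass (some ⟨j, c⟩)
  rw [Fintype.sum_option, Fintype.sum_sigma, Finset.sum_eq_single j] at h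
  · simpa [hN.node_chain, hN.chain_chain, (hM j).apply c] using h
  · intro j' _ hj'
    simp [hN.chain_ne j' j _ _ hj']
  · simp

variable {a : Fin m → ℤ} {R : ∀ j : Fin m, Fin (ℓ j + 1) → ℤ}

theorem vertexClass_eq_smul_terminal (hN : N.IsStarShaped s₀ M)
    (hM : ∀ j, (M j).IsChainShaped) (hRlast : ∀ j, R j (Fin.last (ℓ j)) = 1)
    (hRrel : ∀ j, (M j).mulVec (R j) = fun i => if i = 0 then -(a j) else 0)
    (j : Fin m) (i : Fin (ℓ j + 1)) :
    N.vertexClass (some ⟨j, i⟩) = R j i • N.vertexClass (some ⟨j, Fin.last (ℓ j)⟩) :=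
  (hM j).eq_smul_last (x := fun i => N.vertexClass (some ⟨j, i⟩))
    (fun c hc => by
      have h := hN.vertexClass_chain_relation (fun j => (hM j).isSymm) j c
      rwa [if_neg hc, zero_add] at h)
    (fun c hc => by simp [hRrel j, hc]) (hRlast j) i

theorem vertexClass_node_eq_smul_terminal (hN : N.IsStarShaped s₀ M)
    (hM : ∀ j, (M j).IsChainShaped) (hRlast : ∀ j, R j (Fin.last (ℓ j)) = 1)
    (hRrel : ∀ j, (M j).mulVec (R j) = fun i => if i = 0 then -(a j) else 0) (j : Fin m) :
    N.vertexClass none = a j • N.vertexClass (some ⟨j, Fin.last (ℓ j)⟩) := by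
  have h := hN.vertexClass_chain_relation (fun j => (hM j).isSymm) j 0
  have hrow : ∑ i, M j 0 i • N.vertexClass (some ⟨j, i⟩) =
      ∑ i, M j 0 i • R j i • N.vertexClass (some ⟨j, Fin.last (ℓ j)⟩) :=
    Finset.sum_congr rfl fun i _ => by rw [hN.vertexClass_eq_smul_terminal hM hRlast hRrel j i]
  rw [hrow, ← mulVec_apply_smul, hRrel j] at h
  simpa only [if_pos, neg_smul, add_neg_eq_zero] using h

theorem span_terminal_eq_top (hN : N.IsStarShaped s₀ M) (hm : 0 < m)
    (hM : ∀ j, (M j).IsChainShaped) (hRlast : ∀ j, R j (Fin.last (ℓ j)) = 1)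
    (hRrel : ∀ j, (M j).mulVec (R j) = fun i => if i = 0 then -(a j) else 0) :
    Submodule.span ℤ (Set.range fun j => N.vertexClass (some ⟨j, Fin.last (ℓ j)⟩)) = ⊤ := by
  rw [eq_top_iff, ← N.span_range_vertexClass, Submodule.span_le]
  rintro _ ⟨v, rfl⟩
  rcases v with _ | ⟨j, i⟩
  · rw [hN.vertexClass_node_eq_smul_terminal hM hRlast hRrel ⟨0, hm⟩]
    exact Submodule.smul_mem _ _ (Submodule.subset_span ⟨_, rfl⟩)
  · rw [hN.vertexClass_eq_smul_terminal hM hRlast hRrel]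
    exact Submodule.smul_mem _ _ (Submodule.subset_span ⟨_, rfl⟩)

theorem discriminantGroup_smul_eq_zero (hN : N.IsStarShaped s₀ M) (hm : 0 < m)
    (hM : ∀ j, (M j).IsChainShaped) (hRlast : ∀ j, R j (Fin.last (ℓ j)) = 1)
    (hRrel : ∀ j, (M j).mulVec (R j) = fun i => if i = 0 then -(a j) else 0)
    {L : ℤ} {q : Fin m → ℤ} (hq : ∀ j, L = a j * q j) (x : N.DiscriminantGroup) :
    (L * (L * s₀ - ∑ j, q j * R j 0)) • x = 0 := by
  set c := L * s₀ - ∑ j, q j * R j 0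
  have hnode : c • N.vertexClass none = 0 := by
    rw [sub_smul, mul_smul, hN.smul_vertexClass_node, Finset.smul_sum, Finset.sum_smul,
      sub_eq_zero]
    refine Finset.sum_congr rfl fun j _ => ?_
    rw [hN.vertexClass_eq_smul_terminal hM hRlast hRrel j 0,
      hN.vertexClass_node_eq_smul_terminal hM hRlast hRrel j, smul_smul, smul_smul, hq j]
    congr 1
    ring
  have hterminal (j : Fin m) : (L * c) • N.vertexClass (some ⟨j, Fin.last (ℓ j)⟩) = 0 :=
    calc (L * c) • N.vertexClass (some ⟨j, Fin.last (ℓ j)⟩)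
        = q j • c • a j • N.vertexClass (some ⟨j, Fin.last (ℓ j)⟩) := by
          rw [smul_smul, smul_smul, hq j]
          congr 1
          ring
      _ = 0 := by
          rw [← hN.vertexClass_node_eq_smul_terminal hM hRlast hRrel j, hnode, smul_zero]
  have hkill := LinearMap.ext_on_range (hN.span_terminal_eq_top hm hM hRlast hRrel)
    (f := (L * c) • LinearMap.id) (g := 0) hterminal
  exact LinearMap.congr_fun hkill x

end IsStarShaped

end Matrix

theorem intCast_mul_sub_sum_eq_sq_mul_sub_sum_div {ι : Type*} [Fintype ι] {L : ℤ} {a q : ι → ℤ}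
    (hq : ∀ j, L = a j * q j) (s : ℤ) (b : ι → ℤ) :
    ((L * (L * s - ∑ j, q j * b j) : ℤ) : ℚ) = (L : ℚ) ^ 2 * (s - ∑ j, (b j : ℚ) / a j) := by
  push_cast
  rw [mul_sub, mul_sub, Finset.mul_sum, Finset.mul_sum]
  congr 1
  · ring
  · refine Finset.sum_congr rfl fun j _ => ?_
    rw [hq j]
    push_cast
    rcases eq_or_ne (a j : ℚ) 0 with ha | ha
    · simp [ha]
    · field_simp

theorem star_shaped_generators_general
    (m : ℕ) (hm : 3 ≤ m)
    (ℓ : Fin m → ℕ)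
    (M : ∀ j : Fin m, Matrix (Fin (ℓ j + 1)) (Fin (ℓ j + 1)) ℤ)
    (hMadj : ∀ (j : Fin m) (i i' : Fin (ℓ j + 1)),
      ((i : ℕ) + 1 = (i' : ℕ) ∨ (i' : ℕ) + 1 = (i : ℕ)) → M j i i' = 1)
    (hMoff : ∀ (j : Fin m) (i i' : Fin (ℓ j + 1)),
      i ≠ i' → (i : ℕ) + 1 ≠ (i' : ℕ) → (i' : ℕ) + 1 ≠ (i : ℕ) → M j i i' = 0)
    (a : Fin m → ℤ)
    (R : ∀ j : Fin m, Fin (ℓ j + 1) → ℤ)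
    (hRlast : ∀ j, R j (Fin.last (ℓ j)) = 1)
    (hRrel : ∀ j, (M j).mulVec (R j) = fun i => if i = 0 then -(a j) else 0)
    (s₀ : ℤ)
    (N : Matrix (Option ((j : Fin m) × Fin (ℓ j + 1)))
                (Option ((j : Fin m) × Fin (ℓ j + 1))) ℤ)
    (hN₀ : N none none = -s₀)
    (hN₁ : ∀ (j : Fin m) (i : Fin (ℓ j + 1)),
      N none (some ⟨j, i⟩) = if i = 0 then 1 else 0)
    (hN₂ : ∀ (j : Fin m) (i : Fin (ℓ j + 1)),
      N (some ⟨j, i⟩) none = if i = 0 then 1 else 0)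
    (hN₃ : ∀ (j : Fin m) (i i' : Fin (ℓ j + 1)),
      N (some ⟨j, i⟩) (some ⟨j, i'⟩) = M j i i')
    (hN₄ : ∀ (j j' : Fin m) (i : Fin (ℓ j + 1)) (i' : Fin (ℓ j' + 1)),
      j ≠ j' → N (some ⟨j, i⟩) (some ⟨j', i'⟩) = 0) :
    (Submodule.span ℤ (Set.range fun j : Fin m =>
        (Submodule.Quotient.mk
            (Pi.single (some ⟨j, Fin.last (ℓ j)⟩ : Option ((j : Fin m) × Fin (ℓ j + 1))) (1 : ℤ)) :
          (Option ((j : Fin m) × Fin (ℓ j + 1)) → ℤ) ⧸ LinearMap.range N.mulVecLin)) = ⊤) ∧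
    (∀ j : Fin m,
      (Submodule.Quotient.mk
          (Pi.single (none : Option ((j : Fin m) × Fin (ℓ j + 1))) (1 : ℤ)) :
        (Option ((j : Fin m) × Fin (ℓ j + 1)) → ℤ) ⧸ LinearMap.range N.mulVecLin) =
      a j • Submodule.Quotient.mk
          (Pi.single (some ⟨j, Fin.last (ℓ j)⟩ : Option ((j : Fin m) × Fin (ℓ j + 1))) (1 : ℤ))) ∧
    (∃ c : ℤ, (c : ℚ) = ((Finset.univ.lcm a : ℤ) : ℚ) ^ 2 *
        ((s₀ : ℚ) - ∑ j, (R j 0 : ℚ) / (a j : ℚ)) ∧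
      ∀ x : (Option ((j : Fin m) × Fin (ℓ j + 1)) → ℤ) ⧸ LinearMap.range N.mulVecLin,
        c • x = 0) := by
  have hM : ∀ j, (M j).IsChainShaped := fun j => ⟨hMadj j, hMoff j⟩
  have hN : N.IsStarShaped s₀ M := ⟨hN₀, hN₁, hN₂, hN₃, hN₄⟩
  have hm₀ : 0 < m := by omega
  choose q hq using fun j => Finset.dvd_lcm (s := Finset.univ) (f := a) (Finset.mem_univ j)
  exact ⟨hN.span_terminal_eq_top hm₀ hM hRlast hRrel,
    hN.vertexClass_node_eq_smul_terminal hM hRlast hRrel,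
    _, intCast_mul_sub_sum_eq_sq_mul_sub_sum_div hq s₀ (fun j => R j 0),
    hN.discriminantGroup_smul_eq_zero hm₀ hM hRlast hRrel hq⟩

/-- **Star-shaped intersection matrices: generators of the discriminant group.**
Let `N = N(s₀ | a₁/b₁, …, a_m/b_m)` be a star-shaped intersection matrix, and let `w_j` be the
terminal vertex of the `j`-th chain.  Then the discriminant group `Φ_N` is generated by the
classes of the `e_{w_j}`; the class of `e_{v₀}` equals the class of `a_j·e_{w_j}` for each `j`;
and `Φ_N` is killed by `lcm(a₁,…,a_m)²·(s₀ − Σ b_j/a_j)`. -/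
theorem star_shaped_generators
    (m : ℕ) (hm : 3 ≤ m)
    (ℓ : Fin m → ℕ)
    (M : ∀ j : Fin m, Matrix (Fin (ℓ j + 1)) (Fin (ℓ j + 1)) ℤ)
    (hMdiag : ∀ j i, M j i i ≤ -2)
    (hMadj : ∀ (j : Fin m) (i i' : Fin (ℓ j + 1)),
      ((i : ℕ) + 1 = (i' : ℕ) ∨ (i' : ℕ) + 1 = (i : ℕ)) → M j i i' = 1)
    (hMoff : ∀ (j : Fin m) (i i' : Fin (ℓ j + 1)),
      i ≠ i' → (i : ℕ) + 1 ≠ (i' : ℕ) → (i' : ℕ) + 1 ≠ (i : ℕ) → M j i i' = 0)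
    (a : Fin m → ℤ) (ha : ∀ j, 1 ≤ a j)
    (R : ∀ j : Fin m, Fin (ℓ j + 1) → ℤ)
    (hRpos : ∀ j i, 0 < R j i)
    (hRlast : ∀ j, R j (Fin.last (ℓ j)) = 1)
    (hRrel : ∀ j, (M j).mulVec (R j) = fun i => if i = 0 then -(a j) else 0)
    (s₀ : ℤ) (hs₀ : 1 ≤ s₀)
    (N : Matrix (Option ((j : Fin m) × Fin (ℓ j + 1)))
                (Option ((j : Fin m) × Fin (ℓ j + 1))) ℤ)
    (hN₀ : N none none = -s₀)
    (hN₁ : ∀ (j : Fin m) (i : Fin (ℓ j + 1)),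
      N none (some ⟨j, i⟩) = if i = 0 then 1 else 0)
    (hN₂ : ∀ (j : Fin m) (i : Fin (ℓ j + 1)),
      N (some ⟨j, i⟩) none = if i = 0 then 1 else 0)
    (hN₃ : ∀ (j : Fin m) (i i' : Fin (ℓ j + 1)),
      N (some ⟨j, i⟩) (some ⟨j, i'⟩) = M j i i')
    (hN₄ : ∀ (j j' : Fin m) (i : Fin (ℓ j + 1)) (i' : Fin (ℓ j' + 1)),
      j ≠ j' → N (some ⟨j, i⟩) (some ⟨j', i'⟩) = 0)
    (hNdef : ∀ v : Option ((j : Fin m) × Fin (ℓ j + 1)) → ℚ, v ≠ 0 →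
      v ⬝ᵥ (N.map (Int.cast : ℤ → ℚ)).mulVec v < 0) :
    (Submodule.span ℤ (Set.range fun j : Fin m =>
        (Submodule.Quotient.mk
            (Pi.single (some ⟨j, Fin.last (ℓ j)⟩ : Option ((j : Fin m) × Fin (ℓ j + 1))) (1 : ℤ)) :
          (Option ((j : Fin m) × Fin (ℓ j + 1)) → ℤ) ⧸ LinearMap.range N.mulVecLin)) = ⊤) ∧
    (∀ j : Fin m,
      (Submodule.Quotient.mk
          (Pi.single (none : Option ((j : Fin m) × Fin (ℓ j + 1))) (1 : ℤ)) :
        (Option ((j : Fin m) × Fin (ℓ j + 1)) → ℤ) ⧸ LinearMap.range N.mulVecLin) =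
      a j • Submodule.Quotient.mk
          (Pi.single (some ⟨j, Fin.last (ℓ j)⟩ : Option ((j : Fin m) × Fin (ℓ j + 1))) (1 : ℤ))) ∧
    (∃ c : ℤ, (c : ℚ) = ((Finset.univ.lcm a : ℤ) : ℚ) ^ 2 *
        ((s₀ : ℚ) - ∑ j, (R j 0 : ℚ) / (a j : ℚ)) ∧
      ∀ x : (Option ((j : Fin m) × Fin (ℓ j + 1)) → ℤ) ⧸ LinearMap.range N.mulVecLin,
        c • x = 0) :=
  star_shaped_generators_general m hm ℓ M hMadj hMoff a R hRlast hRrel s₀ N hN₀ hN₁ hN₂ hN₃ hN₄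
end

section
/- Let N = N(s_0 | a_1/b_1, …, a_m/b_m) be an n×n star-shaped intersection matrix built from an integer s_0 ≥ 1 and m ≥ 3 Hirzebruch–Jung chain matrices N_1, …, N_m with associated data (a_j, b_j, R_j). Let p be a prime and assume the discriminant group Φ_N is killed by p (i.e., p·x = 0 for every x ∈ Φ_N). If p divides a_j for some j, then the class of e_{v_0} (the node) is trivial in Φ_N. -/
open Matrix BigOperators

/-!
Extending the vector `R_j` of the `j`-th chain by zero gives `y` with
`N y = b_j e_{v₀} - a_j e_{u_j}`, where `u_j` is the first vertex of the chain and `b_j = R_j(0)`.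
Hence `b_j [e_{v₀}] = a_j [e_{u_j}]` in `Φ_N`, and this vanishes since `p ∣ a_j` and `p` kills
`Φ_N`. On the other hand `p ∤ b_j`: reading `M_j R_j = -a_j e_1` row by row, `p ∣ a_j` and
`p ∣ b_j` would force `p` to divide every entry of `R_j`, including the last one, `1`. So
`[e_{v₀}]` is killed by the coprime integers `p` and `b_j`.
-/

theorem dvd_of_dvd_mulVec_of_unit_superdiag {α : Type*} [CommRing α] {n : ℕ}
    {M : Matrix (Fin (n + 1)) (Fin (n + 1)) α} {v : Fin (n + 1) → α} {p : α}
    (hsup : ∀ i i' : Fin (n + 1), (i : ℕ) + 1 = i' → M i i' = 1)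
    (habove : ∀ i i' : Fin (n + 1), (i : ℕ) + 1 < i' → M i i' = 0)
    (hMv : ∀ i, p ∣ (M *ᵥ v) i) (h0 : p ∣ v 0) (i : Fin (n + 1)) : p ∣ v i := by
  suffices h : ∀ k : ℕ, ∀ i : Fin (n + 1), (i : ℕ) ≤ k → p ∣ v i from h i i le_rfl
  intro k
  induction k with
  | zero => intro i hi; rwa [show i = 0 from Fin.ext (by simpa using hi)]
  | succ k ih =>
    intro i hi
    rcases Nat.lt_or_ge (i : ℕ) (k + 1) with hlt | hge
    · exact ih i (by omega)
    -- row `k` of `M *ᵥ v` involves `v i` with coefficient 1 and otherwise only `v 0, …, v k`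
    set i₀ : Fin (n + 1) := ⟨k, by omega⟩
    have hrest : p ∣ ∑ i' ∈ Finset.univ.erase i, M i₀ i' * v i' := by
      refine Finset.dvd_sum fun i' hi' => ?_
      rcases Nat.lt_or_ge (i' : ℕ) (k + 1) with hlt' | hge'
      · exact (ih i' (by omega)).mul_left _
      · have hne : (i' : ℕ) ≠ i := fun h => Finset.ne_of_mem_erase hi' (Fin.ext h)
        rw [habove i₀ i' (show k + 1 < (i' : ℕ) by omega), zero_mul]
        exact dvd_zero p
    have hrow := hMv i₀
    rw [mulVec, dotProduct, ← Finset.sum_erase_add _ _ (Finset.mem_univ i),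
      hsup i₀ i (show k + 1 = (i : ℕ) by omega), one_mul] at hrow
    exact (dvd_add_right hrest).mp hrow

theorem eq_zero_of_isCoprime_of_smul_eq_zero {R E : Type*} [CommSemiring R] [AddCommMonoid E]
    [Module R E] {x y : R} {e : E} (h : IsCoprime x y) (hx : x • e = 0) (hy : y • e = 0) :
    e = 0 := by
  obtain ⟨u, w, huw⟩ := h
  calc e = (u * x + w * y) • e := by rw [huw, one_smul]
    _ = 0 := by rw [add_smul, mul_smul, mul_smul, hx, hy, smul_zero, smul_zero, add_zero]

section StarShaped

variable {α ι : Type*} [DecidableEq ι] {ℓ : ι → ℕ}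

def chainExtend [Zero α] (j : ι) (v : ∀ j, Fin (ℓ j + 1) → α) :
    Option ((j : ι) × Fin (ℓ j + 1)) → α
  | none => 0
  | some x => if x.1 = j then v x.1 x.2 else 0

theorem chainExtend_single [Zero α] (j : ι) (c : ι → α) :
    chainExtend (ℓ := ℓ) j (fun j' => Pi.single 0 (c j')) =
      Pi.single (some ⟨j, 0⟩) (c j) := by
  funext o
  rcases o with _ | ⟨j', i⟩
  · simp [chainExtend]
  · by_cases h : j' = j
    · subst h; simp [chainExtend, Pi.single_apply]
    · simp [chainExtend, h]

theorem mulVec_chainExtend [Fintype ι] [NonAssocSemiring α]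
    {M : ∀ j, Matrix (Fin (ℓ j + 1)) (Fin (ℓ j + 1)) α}
    {N : Matrix (Option ((j : ι) × Fin (ℓ j + 1))) (Option ((j : ι) × Fin (ℓ j + 1))) α}
    (hN₁ : ∀ j i, N none (some ⟨j, i⟩) = if i = 0 then 1 else 0)
    (hN₃ : ∀ j i i', N (some ⟨j, i⟩) (some ⟨j, i'⟩) = M j i i')
    (hN₄ : ∀ j j' i i', j ≠ j' → N (some ⟨j, i⟩) (some ⟨j', i'⟩) = 0)
    (j : ι) (v : ∀ j, Fin (ℓ j + 1) → α) :
    N *ᵥ chainExtend j v = Pi.single none (v j 0) + chainExtend j (fun j => M j *ᵥ v j) := by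
  funext o
  rcases o with _ | ⟨j', i⟩
  · simp only [mulVec, dotProduct, chainExtend, Fintype.sum_option, mul_zero, hN₁, mul_ite,
      ite_mul, one_mul, zero_mul, Fintype.sum_sigma, Finset.sum_ite_irrel, Finset.sum_const_zero,
      Finset.sum_ite_eq', Finset.mem_univ, ↓reduceIte, zero_add, Pi.add_apply, Pi.single_eq_same,
      add_zero]
    exact Fintype.sum_ite_eq' (0 : Fin (ℓ j + 1)) (v j)
  · by_cases h : j' = j
    · subst h
      simp [mulVec, dotProduct, Fintype.sum_option, Fintype.sum_sigma, chainExtend, hN₃]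
    · simp [mulVec, dotProduct, Fintype.sum_option, Fintype.sum_sigma, chainExtend, h,
        hN₄ _ _ _ _ h]

end StarShaped

theorem star_shaped_node_trivial_general
    (m : ℕ)
    (ℓ : Fin m → ℕ)
    (M : ∀ j : Fin m, Matrix (Fin (ℓ j + 1)) (Fin (ℓ j + 1)) ℤ)
    (hMadj : ∀ (j : Fin m) (i i' : Fin (ℓ j + 1)),
      ((i : ℕ) + 1 = (i' : ℕ) ∨ (i' : ℕ) + 1 = (i : ℕ)) → M j i i' = 1)
    (hMoff : ∀ (j : Fin m) (i i' : Fin (ℓ j + 1)),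
      i ≠ i' → (i : ℕ) + 1 ≠ (i' : ℕ) → (i' : ℕ) + 1 ≠ (i : ℕ) → M j i i' = 0)
    (a : Fin m → ℤ)
    (R : ∀ j : Fin m, Fin (ℓ j + 1) → ℤ)
    (hRlast : ∀ j, R j (Fin.last (ℓ j)) = 1)
    (hRrel : ∀ j, (M j).mulVec (R j) = fun i => if i = 0 then -(a j) else 0)
    (N : Matrix (Option ((j : Fin m) × Fin (ℓ j + 1)))
                (Option ((j : Fin m) × Fin (ℓ j + 1))) ℤ)
    (hN₁ : ∀ (j : Fin m) (i : Fin (ℓ j + 1)),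
      N none (some ⟨j, i⟩) = if i = 0 then 1 else 0)
    (hN₃ : ∀ (j : Fin m) (i i' : Fin (ℓ j + 1)),
      N (some ⟨j, i⟩) (some ⟨j, i'⟩) = M j i i')
    (hN₄ : ∀ (j j' : Fin m) (i : Fin (ℓ j + 1)) (i' : Fin (ℓ j' + 1)),
      j ≠ j' → N (some ⟨j, i⟩) (some ⟨j', i'⟩) = 0)
    (p : ℕ) (hp : p.Prime)
    (hkilled : ∀ x : (Option ((j : Fin m) × Fin (ℓ j + 1)) → ℤ) ⧸ LinearMap.range N.mulVecLin,
      (p : ℤ) • x = 0)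
    (hdvd : ∃ j : Fin m, (p : ℤ) ∣ a j) :
    (Submodule.Quotient.mk
        (Pi.single (none : Option ((j : Fin m) × Fin (ℓ j + 1))) (1 : ℤ)) :
      (Option ((j : Fin m) × Fin (ℓ j + 1)) → ℤ) ⧸ LinearMap.range N.mulVecLin) = 0 := by
  obtain ⟨j, hja⟩ := hdvd
  have hpb : ¬ (p : ℤ) ∣ R j 0 := fun hb => by
    have hdvd_all := dvd_of_dvd_mulVec_of_unit_superdiag
      (fun i i' h => hMadj j i i' (Or.inl h))
      (fun i i' h => hMoff j i i' (Fin.ne_of_val_ne (by omega)) (by omega) (by omega))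
      (fun i => by rw [hRrel j]; dsimp only; split_ifs <;> simp [hja]) hb (Fin.last (ℓ j))
    rw [hRlast j] at hdvd_all
    exact hp.not_dvd_one (Int.natCast_dvd_ofNat.mp hdvd_all)
  have hNR : N *ᵥ chainExtend j R
      = Pi.single none (R j 0) + Pi.single (some ⟨j, 0⟩) (-a j) := by
    have hRrel' : (fun j => M j *ᵥ R j) = fun j => Pi.single 0 (-a j) := by
      funext j i
      simp [hRrel j, Pi.single_apply]
    rw [mulVec_chainExtend hN₁ hN₃ hN₄, hRrel', chainExtend_single]
  set E := Submodule.Quotient.mk (p := LinearMap.range N.mulVecLin) (Pi.single none (1 : ℤ))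
  set F := Submodule.Quotient.mk (p := LinearMap.range N.mulVecLin)
    (Pi.single (some ⟨j, 0⟩) (1 : ℤ))
  have hrel : R j 0 • E = a j • F := by
    rw [← Submodule.Quotient.mk_smul, ← Submodule.Quotient.mk_smul, Submodule.Quotient.eq]
    exact ⟨chainExtend j R, by simp [hNR, ← Pi.single_smul, sub_eq_add_neg, Pi.single_neg]⟩
  have hbE : R j 0 • E = 0 := by
    obtain ⟨c, hc⟩ := hja
    rw [hrel, hc, mul_comm, mul_smul, hkilled, smul_zero]
  exact eq_zero_of_isCoprime_of_smul_eq_zero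
    ((Nat.prime_iff_prime_int.mp hp).coprime_iff_not_dvd.mpr hpb) (hkilled E) hbE

/-- **Star-shaped intersection matrices: triviality of the node class.**
Let `N = N(s₀ | a₁/b₁, …, a_m/b_m)` be a star-shaped intersection matrix and `p` a prime.
If the discriminant group `Φ_N` is killed by `p` and `p` divides some `a_j`, then the class of
the standard basis vector of the node `v₀` is trivial in `Φ_N`. -/
theorem star_shaped_node_trivial
    (m : ℕ) (hm : 3 ≤ m)
    (ℓ : Fin m → ℕ)
    (M : ∀ j : Fin m, Matrix (Fin (ℓ j + 1)) (Fin (ℓ j + 1)) ℤ)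
    (hMdiag : ∀ j i, M j i i ≤ -2)
    (hMadj : ∀ (j : Fin m) (i i' : Fin (ℓ j + 1)),
      ((i : ℕ) + 1 = (i' : ℕ) ∨ (i' : ℕ) + 1 = (i : ℕ)) → M j i i' = 1)
    (hMoff : ∀ (j : Fin m) (i i' : Fin (ℓ j + 1)),
      i ≠ i' → (i : ℕ) + 1 ≠ (i' : ℕ) → (i' : ℕ) + 1 ≠ (i : ℕ) → M j i i' = 0)
    (a : Fin m → ℤ) (ha : ∀ j, 1 ≤ a j)
    (R : ∀ j : Fin m, Fin (ℓ j + 1) → ℤ)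
    (hRpos : ∀ j i, 0 < R j i)
    (hRlast : ∀ j, R j (Fin.last (ℓ j)) = 1)
    (hRrel : ∀ j, (M j).mulVec (R j) = fun i => if i = 0 then -(a j) else 0)
    (s₀ : ℤ) (hs₀ : 1 ≤ s₀)
    (N : Matrix (Option ((j : Fin m) × Fin (ℓ j + 1)))
                (Option ((j : Fin m) × Fin (ℓ j + 1))) ℤ)
    (hN₀ : N none none = -s₀)
    (hN₁ : ∀ (j : Fin m) (i : Fin (ℓ j + 1)),
      N none (some ⟨j, i⟩) = if i = 0 then 1 else 0)
    (hN₂ : ∀ (j : Fin m) (i : Fin (ℓ j + 1)),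
      N (some ⟨j, i⟩) none = if i = 0 then 1 else 0)
    (hN₃ : ∀ (j : Fin m) (i i' : Fin (ℓ j + 1)),
      N (some ⟨j, i⟩) (some ⟨j, i'⟩) = M j i i')
    (hN₄ : ∀ (j j' : Fin m) (i : Fin (ℓ j + 1)) (i' : Fin (ℓ j' + 1)),
      j ≠ j' → N (some ⟨j, i⟩) (some ⟨j', i'⟩) = 0)
    (hNdef : ∀ v : Option ((j : Fin m) × Fin (ℓ j + 1)) → ℚ, v ≠ 0 →
      v ⬝ᵥ (N.map (Int.cast : ℤ → ℚ)).mulVec v < 0)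
    (p : ℕ) (hp : p.Prime)
    (hkilled : ∀ x : (Option ((j : Fin m) × Fin (ℓ j + 1)) → ℤ) ⧸ LinearMap.range N.mulVecLin,
      (p : ℤ) • x = 0)
    (hdvd : ∃ j : Fin m, (p : ℤ) ∣ a j) :
    (Submodule.Quotient.mk
        (Pi.single (none : Option ((j : Fin m) × Fin (ℓ j + 1))) (1 : ℤ)) :
      (Option ((j : Fin m) × Fin (ℓ j + 1)) → ℤ) ⧸ LinearMap.range N.mulVecLin) = 0 :=
  star_shaped_node_trivial_general m ℓ M hMadj hMoff a R hRlast hRrel N hN₁ hN₃ hN₄ p hp hkilled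
    hdvd
end

section
/- Let p be an odd prime and let r ≥ 1 be an integer. Then there exist integers m, n ≥ 1 such that gcd(p·m + 1, p·n + 1) = p·r + 2. (Explicitly, n = (pr + r + 2)/2 and m = n + (pr + 2) have this property.) -/
/-- **Gcd lemma for Brieskorn exponents.**
Let `p` be an odd prime and `r ≥ 1`.  Then there exist integers `m, n ≥ 1` with
`gcd(pm + 1, pn + 1) = pr + 2`; explicitly one may take `n = (pr + r + 2)/2` and
`m = n + (pr + 2)`. -/
theorem exists_gcd_eq_pr_add_two (p : ℕ) (hp : p.Prime) (hodd : Odd p)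
    (r : ℕ) (hr : 1 ≤ r) :
    ∃ m n : ℕ, 1 ≤ m ∧ 1 ≤ n ∧
      Nat.gcd (p * m + 1) (p * n + 1) = p * r + 2 ∧
      2 * n = p * r + r + 2 ∧ m = n + (p * r + 2) := by
  obtain ⟨k, hk⟩ := hodd
  subst hk
  refine ⟨(k*r + r + 1) + ((2*k+1) * r + 2), k*r + r + 1, by omega, by omega, ?_, by ring, rfl⟩
  have h1 : (2*k+1) * ((k*r + r + 1) + ((2*k+1) * r + 2)) + 1
      = ((2*k+1)*r + 2) * (3*k + 2) := by ring
  have h2 : (2*k+1) * (k*r + r + 1) + 1 = ((2*k+1)*r + 2) * (k + 1) := by ring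
  rw [h1, h2, Nat.gcd_mul_left]
  have hco : Nat.gcd (3*k + 2) (k + 1) = 1 := by
    have hd : Nat.gcd (3*k + 2) (k + 1) ∣ 1 := by
      have hl := Nat.gcd_dvd_left (3*k + 2) (k + 1)
      have hr' := (Nat.gcd_dvd_right (3*k + 2) (k + 1)).mul_left 3
      have := Nat.dvd_sub hr' hl
      simpa [show 3 * (k+1) - (3*k+2) = 1 by omega] using this
    exact Nat.dvd_one.mp hd
  rw [hco, mul_one]
end

section
/- Let N = (c_{ij}) be an n×n intersection matrix whose discriminant group Φ_N = ℤ^n/Nℤ^n is killed by 2, i.e., 2·x = 0 for every x ∈ Φ_N. Then N is numerically Gorenstein: there exists an integer vector K ∈ ℤ^n with N·K = H_0, where H_0 ∈ ℤ^n is the vector with i-th entry −c_{ii} − 2. -/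
open Matrix BigOperators

lemma aux_even (n : ℕ) (N : Matrix (Fin n) (Fin n) ℤ) (hsymm : N.IsSymm) (x : Fin n → ℤ)
    (hx : (2:ℤ) ∣ x ⬝ᵥ N.mulVec x) : (2:ℤ) ∣ x ⬝ᵥ (fun j => -N j j - 2) := by
  classical
  have hx' : ((x ⬝ᵥ N.mulVec x : ℤ) : ZMod 2) = 0 :=
    (ZMod.intCast_zmod_eq_zero_iff_dvd _ 2).mpr (by exact_mod_cast hx)
  suffices h : ((x ⬝ᵥ (fun j => -N j j - 2) : ℤ) : ZMod 2) = 0 by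
    exact_mod_cast (ZMod.intCast_zmod_eq_zero_iff_dvd _ 2).mp h
  have key : (∑ i, (x i : ZMod 2) * (N i i : ZMod 2)) = 0 := by
    have expand : ((x ⬝ᵥ N.mulVec x : ℤ) : ZMod 2)
        = ∑ p ∈ (Finset.univ ×ˢ Finset.univ : Finset (Fin n × Fin n)),
            (x p.1 : ZMod 2) * (N p.1 p.2 : ZMod 2) * (x p.2 : ZMod 2) := by
      rw [Finset.sum_product]
      simp [dotProduct, Matrix.mulVec, Finset.mul_sum, mul_assoc]
    rw [expand, ← Finset.diag_union_offDiag,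
      Finset.sum_union (Finset.disjoint_diag_offDiag _)] at hx'
    have hdiagsum : ∑ p ∈ (Finset.univ : Finset (Fin n)).diag,
        (x p.1 : ZMod 2) * (N p.1 p.2 : ZMod 2) * (x p.2 : ZMod 2)
        = ∑ i, (x i : ZMod 2) * (N i i : ZMod 2) := by
      rw [Finset.sum_diag]
      refine Finset.sum_congr rfl fun i _ => ?_
      have : (x i : ZMod 2) * (x i : ZMod 2) = (x i : ZMod 2) := by
        have := ZMod.pow_card (x i : ZMod 2)
        rwa [pow_two] at this
      rw [mul_comm ((x i : ZMod 2)) ((N i i : ZMod 2)), mul_assoc, this, mul_comm]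
    have hoffsum : ∑ p ∈ (Finset.univ : Finset (Fin n)).offDiag,
        (x p.1 : ZMod 2) * (N p.1 p.2 : ZMod 2) * (x p.2 : ZMod 2) = 0 := by
      refine Finset.sum_involution (fun p _ => p.swap) ?_ ?_ ?_ ?_
      · intro p hp
        have hs : N p.2 p.1 = N p.1 p.2 := hsymm.apply p.1 p.2 ▸ hsymm.apply p.2 p.1
        have heq : (x p.2 : ZMod 2) * (N p.2 p.1 : ZMod 2) * (x p.1 : ZMod 2)
            = (x p.1 : ZMod 2) * (N p.1 p.2 : ZMod 2) * (x p.2 : ZMod 2) := by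
          rw [hs]; ring
        rw [Prod.fst_swap, Prod.snd_swap, heq, ← two_mul,
          show (2 : ZMod 2) = 0 from by decide, zero_mul]
      · intro p hp _
        have h := (Finset.mem_offDiag.mp hp).2.2
        intro hc
        exact h (congrArg Prod.snd hc ▸ rfl)
      · intro p hp
        have h := Finset.mem_offDiag.mp hp
        exact Finset.mem_offDiag.mpr ⟨h.2.1, h.1, fun e => h.2.2 e.symm⟩
      · intro p hp; simp
    rw [hdiagsum, hoffsum, add_zero] at hx'
    exact hx'
  have hcast : ((x ⬝ᵥ (fun j => -N j j - 2) : ℤ) : ZMod 2)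
      = ∑ i, (x i : ZMod 2) * (N i i : ZMod 2) := by
    rw [dotProduct]
    push_cast
    refine Finset.sum_congr rfl fun i _ => ?_
    have h2 : ((2:ℤ) : ZMod 2) = 0 := by decide
    have hneg : ∀ a : ZMod 2, -a = a := by decide
    rw [show (2 : ZMod 2) = 0 from by decide, sub_zero, hneg]
  rw [hcast, key]

/-- **Intersection matrices with discriminant group killed by `2` are numerically
Gorenstein.**  If `N` is an `n×n` intersection matrix such that `2·x = 0` for every `x` in the
discriminant group `Φ_N = ℤⁿ/Nℤⁿ`, then there is an integral vector `K` with `N·K = H₀`, where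
`(H₀)_j = −c_{jj} − 2`. -/
theorem killed_by_two_numerically_gorenstein
    (n : ℕ) (N : Matrix (Fin n) (Fin n) ℤ)
    (hsymm : N.IsSymm)
    (hdiag : ∀ i, N i i < 0)
    (hoff : ∀ i j, i ≠ j → 0 ≤ N i j)
    (hneg : ∀ v : Fin n → ℚ, v ≠ 0 → v ⬝ᵥ (N.map (Int.cast : ℤ → ℚ)).mulVec v < 0)
    (hkilled : ∀ x : (Fin n → ℤ) ⧸ LinearMap.range N.mulVecLin, (2 : ℤ) • x = 0) :
    ∃ K : Fin n → ℤ, N.mulVec K = fun j => -N j j - 2 := by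
  classical
  set H : Fin n → ℤ := fun j => -N j j - 2 with hHdef
  -- step 1: solutions to N w = 2 e_i
  have hex : ∀ i : Fin n, ∃ w : Fin n → ℤ, N.mulVec w = (2:ℤ) • Pi.single i 1 := by
    intro i
    have h := hkilled (Submodule.Quotient.mk (Pi.single i 1))
    rw [← Submodule.Quotient.mk_smul, Submodule.Quotient.mk_eq_zero] at h
    obtain ⟨w, hw⟩ := h
    exact ⟨w, by simpa [Matrix.mulVecLin_apply] using hw⟩
  choose w hw using hex
  -- dot product with single
  have hsingle : ∀ (i : Fin n) (v : Fin n → ℤ), ((2:ℤ) • Pi.single i 1) ⬝ᵥ v = 2 * v i := by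
    intro i v; simp [dotProduct, Pi.single_apply, mul_comm]
  have hmv : ∀ v u : Fin n → ℤ, v ⬝ᵥ N.mulVec u = N.mulVec v ⬝ᵥ u := by
    intro v u
    rw [Matrix.dotProduct_mulVec, ← Matrix.mulVec_transpose, hsymm]
  -- step 2: symmetry of w
  have hwsymm : ∀ i j, w i j = w j i := by
    intro i j
    have h1 : (2:ℤ) * w i j = 2 * w j i := by
      calc (2:ℤ) * w i j = ((2:ℤ) • Pi.single j 1) ⬝ᵥ w i := (hsingle j (w i)).symm
        _ = N.mulVec (w j) ⬝ᵥ w i := by rw [hw j]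
        _ = w j ⬝ᵥ N.mulVec (w i) := (hmv (w j) (w i)).symm
        _ = w j ⬝ᵥ ((2:ℤ) • Pi.single i 1) := by rw [hw i]
        _ = ((2:ℤ) • Pi.single i 1) ⬝ᵥ w j := dotProduct_comm _ _
        _ = 2 * w j i := hsingle i (w j)
    omega
  -- step 3: evenness
  have heven : ∀ i, (2:ℤ) ∣ (w i) ⬝ᵥ H := by
    intro i
    apply aux_even n N hsymm
    have : (w i) ⬝ᵥ N.mulVec (w i) = 2 * w i i := by
      rw [hw i, dotProduct_comm, hsingle]
    exact ⟨w i i, this⟩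
  choose K hK using heven
  refine ⟨K, ?_⟩
  funext j
  have h2 : (2:ℤ) * (N.mulVec K) j = 2 * H j := by
    have step : (2:ℤ) * (N.mulVec K) j = ∑ k, N j k * ((w k) ⬝ᵥ H) := by
      rw [Matrix.mulVec, dotProduct, Finset.mul_sum]
      refine Finset.sum_congr rfl fun k _ => ?_
      rw [hK k]; ring
    rw [step]
    have swap : ∀ k, N j k * ((w k) ⬝ᵥ H) = ∑ m, N j k * (w k m * H m) := by
      intro k; rw [dotProduct, Finset.mul_sum]
    calc ∑ k, N j k * ((w k) ⬝ᵥ H)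
        = ∑ k, ∑ m, N j k * (w k m * H m) := Finset.sum_congr rfl fun k _ => swap k
      _ = ∑ m, ∑ k, N j k * (w k m * H m) := Finset.sum_comm
      _ = ∑ m, (∑ k, N j k * w m k) * H m := by
          refine Finset.sum_congr rfl fun m _ => ?_
          rw [Finset.sum_mul]
          refine Finset.sum_congr rfl fun k _ => ?_
          rw [hwsymm k m]; ring
      _ = ∑ m, ((2:ℤ) • Pi.single m 1 : Fin n → ℤ) j * H m := by
          refine Finset.sum_congr rfl fun m _ => ?_
          rw [show (∑ k, N j k * w m k) = (N.mulVec (w m)) j from rfl, hw m]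
      _ = 2 * H j := by
          simp [Pi.single_apply, Finset.sum_ite_eq, mul_comm]
  omega
end

section
/- Let p be a prime and let N = (c_{ij}) be an n×n intersection matrix whose discriminant group Φ_N is killed by p. Suppose that c_{ii} = −2 for every index i except for a unique index i₀, at which c_{i₀i₀} < −2 and gcd(p, |c_{i₀i₀}| − 2) = 1. Then N is numerically Gorenstein if and only if the class of the standard basis vector e_{i₀} is trivial in Φ_N. -/
open Matrix BigOperators

/-- **Numerically Gorenstein criterion with a unique non-(−2) vertex.**
Let `p` be a prime and `N` an `n×n` intersection matrix whose discriminant group is killed by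
`p`.  Suppose `c_{ii} = −2` for all `i ≠ i₀`, while `c_{i₀i₀} < −2` and
`gcd(p, |c_{i₀i₀}| − 2) = 1`.  Then `N` is numerically Gorenstein iff the class of `e_{i₀}` is
trivial in `Φ_N`. -/
theorem num_gorenstein_iff_node_trivial
    (n : ℕ) (N : Matrix (Fin n) (Fin n) ℤ)
    (hsymm : N.IsSymm)
    (hdiag : ∀ i, N i i < 0)
    (hoff : ∀ i j, i ≠ j → 0 ≤ N i j)
    (hneg : ∀ v : Fin n → ℚ, v ≠ 0 → v ⬝ᵥ (N.map (Int.cast : ℤ → ℚ)).mulVec v < 0)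
    (p : ℕ) (hp : p.Prime)
    (hkilled : ∀ x : (Fin n → ℤ) ⧸ LinearMap.range N.mulVecLin, (p : ℤ) • x = 0)
    (i₀ : Fin n)
    (hi₀ : N i₀ i₀ < -2)
    (hrest : ∀ i, i ≠ i₀ → N i i = -2)
    (hgcd : Nat.gcd p ((N i₀ i₀).natAbs - 2) = 1) :
    (∃ K : Fin n → ℤ, N.mulVec K = fun j => -N j j - 2) ↔
      (Submodule.Quotient.mk (Pi.single i₀ (1 : ℤ)) :
        (Fin n → ℤ) ⧸ LinearMap.range N.mulVecLin) = 0 := by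
  set S := LinearMap.range N.mulVecLin with hS
  set e : Fin n → ℤ := Pi.single i₀ 1 with he
  set c : ℤ := -N i₀ i₀ - 2 with hc
  -- The vector H₀ is c • e
  have hH : (fun j => -N j j - 2) = c • e := by
    funext j
    by_cases hj : j = i₀
    · subst hj; simp [he, hc]
    · simp [he, hc, Pi.single_eq_of_ne hj, hrest j hj]
  -- coprimality
  have hcop : IsCoprime (p : ℤ) c := by
    rw [Int.isCoprime_iff_gcd_eq_one]
    have h1 : c.natAbs = (N i₀ i₀).natAbs - 2 := by omega
    simpa [Int.gcd, h1] using hgcd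
  have hmem : ∀ v : Fin n → ℤ, v ∈ S ↔
      (Submodule.Quotient.mk v : (Fin n → ℤ) ⧸ S) = 0 := fun v =>
    (Submodule.Quotient.mk_eq_zero S).symm
  constructor
  · rintro ⟨K, hK⟩
    -- c • e ∈ S
    have hce : c • e ∈ S := ⟨K, by rw [Matrix.mulVecLin_apply, hK, hH]⟩
    -- p • e ∈ S
    have hpe : (p : ℤ) • e ∈ S := by
      have := hkilled (Submodule.Quotient.mk e)
      rw [← Submodule.Quotient.mk_smul] at this
      exact (Submodule.Quotient.mk_eq_zero S).mp this
    obtain ⟨u, v, huv⟩ := hcop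
    have : e ∈ S := by
      have heq : e = u • ((p : ℤ) • e) + v • (c • e) := by
        rw [smul_smul, smul_smul, ← add_smul, huv, one_smul]
      rw [heq]
      exact S.add_mem (S.smul_mem u hpe) (S.smul_mem v hce)
    rwa [hmem] at this
  · intro h
    have hemem : e ∈ S := by rwa [hmem]
    have : c • e ∈ S := S.smul_mem c hemem
    obtain ⟨K, hK⟩ := this
    exact ⟨K, by rw [← hH] at hK; simpa [Matrix.mulVecLin_apply] using hK⟩
end

section
/- Let p be an odd prime and let N be the 2p × 2p intersection matrix whose graph is a chain of 2p−1 vertices v_1, …, v_{2p−1}, each with self-intersection −2 (so the corresponding submatrix is tridiagonal with diagonal entries −2 and sub/super-diagonal entries 1), together with one extra vertex v of self-intersection −(p+1)/2 joined by a single edge to the middle vertex v_p. Let Z ∈ ℤ^{2p} be the vector with entries Z_{v_i} = min(i, 2p−i) for 1 ≤ i ≤ 2p−1 and Z_v = 2. Then: N·Z = −e_v; Z is the fundamental cycle of N; ᵀZ·N·Z = −2; and the canonical cycle of N equals −((p−3)/2)·Z, i.e., N·(−((p−3)/2)·Z) = H_0, where H_0 has entry −c_{ww} − 2 at each vertex w.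 -/
open Matrix BigOperators

/-- `Z` is the fundamental cycle of `N`: the componentwise-least nonzero componentwise-
non-negative integer vector with `N·Z ≤ 0` componentwise. -/
def IsFundCycle {ι : Type*} [Fintype ι] (N : Matrix ι ι ℤ) (Z : ι → ℤ) : Prop :=
  Z ≠ 0 ∧ (∀ i, 0 ≤ Z i) ∧ (∀ i, N.mulVec Z i ≤ 0) ∧
    ∀ Z' : ι → ℤ, Z' ≠ 0 → (∀ i, 0 ≤ Z' i) → (∀ i, N.mulVec Z' i ≤ 0) → ∀ i, Z i ≤ Z' i


def chainA (p : ℕ) (v : Option (Fin (2 * p - 1)) → ℤ) (k : ℕ) : ℤ :=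
  if h : 0 < k ∧ k < 2 * p then v (some ⟨k - 1, by omega⟩) else 0

lemma sumshift {n : ℕ} (g : Fin n → ℤ) (c : ℕ) :
    (∑ j : Fin n, if (j : ℕ) = c then g j else 0) =
      if h : c < n then g ⟨c, h⟩ else 0 := by
  split_ifs with h
  · rw [Finset.sum_eq_single ⟨c, h⟩]
    · simp
    · intro j _ hj
      exact if_neg fun hc => hj (Fin.ext hc)
    · intro h'; exact absurd (Finset.mem_univ _) h'
  · exact Finset.sum_eq_zero fun j _ => if_neg fun hc => h (by have := j.isLt; omega)

lemma sumshift' {n : ℕ} (g : Fin n → ℤ) (c : ℕ) :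
    (∑ j : Fin n, if (j : ℕ) + 1 = c then g j else 0) =
      if h : 0 < c ∧ c - 1 < n then g ⟨c - 1, h.2⟩ else 0 := by
  split_ifs with h
  · rw [Finset.sum_eq_single ⟨c - 1, h.2⟩]
    · rw [if_pos (show (c - 1) + 1 = c by omega)]
    · intro j _ hj
      refine if_neg fun hc => hj (Fin.ext (show (j : ℕ) = c - 1 by omega))
    · intro h'; exact absurd (Finset.mem_univ _) h'
  · refine Finset.sum_eq_zero fun j _ => if_neg fun hc => ?_
    have := j.isLt; omega

lemma chainA_succ (p : ℕ) (v : Option (Fin (2 * p - 1)) → ℤ) (i : Fin (2 * p - 1)) :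
    chainA p v ((i : ℕ) + 1) = v (some i) := by
  have hi := i.isLt
  rw [chainA, dif_pos (show 0 < (i : ℕ) + 1 ∧ (i : ℕ) + 1 < 2 * p by omega)]
  exact congrArg v (congrArg some (Fin.ext rfl))

lemma mulVec_some (p : ℕ) (hp3 : 3 ≤ p)
    (N : Matrix (Option (Fin (2 * p - 1))) (Option (Fin (2 * p - 1))) ℤ)
    (hNc : ∀ i j : Fin (2 * p - 1), N (some i) (some j) =
      if i = j then -2 else if (i : ℕ) + 1 = (j : ℕ) ∨ (j : ℕ) + 1 = (i : ℕ) then 1 else 0)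
    (hNe' : ∀ i : Fin (2 * p - 1), N (some i) none = if (i : ℕ) + 1 = p then 1 else 0)
    (v : Option (Fin (2 * p - 1)) → ℤ) (i : Fin (2 * p - 1)) :
    N.mulVec v (some i) = chainA p v (i : ℕ) + chainA p v ((i : ℕ) + 2)
      - 2 * chainA p v ((i : ℕ) + 1) + (if (i : ℕ) + 1 = p then v none else 0) := by
  have hi := i.isLt
  have expand : N.mulVec v (some i) =
      N (some i) none * v none + ∑ j : Fin (2 * p - 1), N (some i) (some j) * v (some j) := by
    simp [Matrix.mulVec, dotProduct, Fintype.sum_option]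
  rw [expand, hNe' i]
  have hsplit : ∀ j : Fin (2 * p - 1), N (some i) (some j) * v (some j)
      = (if (j : ℕ) = (i : ℕ) then -2 * v (some j) else 0)
      + ((if (j : ℕ) + 1 = (i : ℕ) then v (some j) else 0)
      + (if (j : ℕ) = (i : ℕ) + 1 then v (some j) else 0)) := by
    intro j
    rw [hNc i j]
    simp only [Fin.ext_iff]
    split_ifs <;> first | ring1 | (exfalso; omega)
  rw [Finset.sum_congr rfl fun j _ => hsplit j, Finset.sum_add_distrib,
    Finset.sum_add_distrib, sumshift (fun j => -2 * v (some j)) (i : ℕ),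
    sumshift' (fun j => v (some j)) (i : ℕ), sumshift (fun j => v (some j)) ((i : ℕ) + 1)]
  rw [dif_pos hi]
  have e1 : chainA p v (i : ℕ) =
      if h : 0 < (i : ℕ) ∧ (i : ℕ) - 1 < 2 * p - 1 then v (some ⟨(i : ℕ) - 1, h.2⟩) else 0 := by
    rw [chainA]; split_ifs with h1 h2 <;> first | rfl | omega
  have e2 : chainA p v ((i : ℕ) + 2) =
      if h : (i : ℕ) + 1 < 2 * p - 1 then v (some ⟨(i : ℕ) + 1, h⟩) else 0 := by
    rw [chainA]; split_ifs with h1 h2 <;> first | rfl | omega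
  rw [← e1, ← e2, chainA_succ]
  have : v (some ⟨(i : ℕ), hi⟩) = v (some i) := congrArg v (congrArg some (Fin.ext rfl))
  rw [this]
  ring_nf
  split_ifs <;> ring

lemma mulVec_none (p : ℕ) (hp3 : 3 ≤ p)
    (N : Matrix (Option (Fin (2 * p - 1))) (Option (Fin (2 * p - 1))) ℤ)
    (hNv : N none none = -(((p + 1) / 2 : ℕ) : ℤ))
    (hNe : ∀ i : Fin (2 * p - 1), N none (some i) = if (i : ℕ) + 1 = p then 1 else 0)
    (v : Option (Fin (2 * p - 1)) → ℤ) :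
    N.mulVec v none = -(((p + 1) / 2 : ℕ) : ℤ) * v none + chainA p v p := by
  have expand : N.mulVec v none =
      N none none * v none + ∑ j : Fin (2 * p - 1), N none (some j) * v (some j) := by
    simp [Matrix.mulVec, dotProduct, Fintype.sum_option]
  rw [expand, hNv]
  have hsplit : ∀ j : Fin (2 * p - 1), N none (some j) * v (some j)
      = (if (j : ℕ) + 1 = p then v (some j) else 0) := by
    intro j
    rw [hNe j]
    split_ifs <;> ring
  rw [Finset.sum_congr rfl fun j _ => hsplit j, sumshift' (fun j => v (some j)) p]
  have e1 : chainA p v p =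
      if h : 0 < p ∧ p - 1 < 2 * p - 1 then v (some ⟨p - 1, h.2⟩) else 0 := by
    rw [chainA]; split_ifs with h1 h2 <;> first | rfl | omega
  rw [← e1]

lemma aux_main (p : ℕ) (hp3 : 3 ≤ p) (hpodd : p % 2 = 1) (a : ℕ → ℤ) (b : ℤ)
    (hpos : ∀ k, 0 ≤ a k) (hb : 0 ≤ b)
    (ha0 : a 0 = 0) (hatop : ∀ k, 2 * p ≤ k → a k = 0)
    (hrow : ∀ i, i < 2 * p - 1 →
      a i + a (i + 2) + (if i + 1 = p then b else 0) ≤ 2 * a (i + 1))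
    (hvp : a p ≤ (((p + 1) / 2 : ℕ) : ℤ) * b)
    (hnz : b ≠ 0 ∨ ∃ k, a k ≠ 0) :
    2 ≤ b ∧ ∀ k, 1 ≤ k → k ≤ 2 * p - 1 → min (k : ℤ) (2 * (p : ℤ) - k) ≤ a k := by
  obtain ⟨m, rfl⟩ : ∃ m, p = 2 * m + 1 := ⟨(p - 1) / 2, by omega⟩
  have hm1 : 1 ≤ m := by omega
  simp only [show 2 * (2 * m + 1) - 1 = 4 * m + 1 from by omega,
    show 2 * (2 * m + 1) = 4 * m + 2 from by omega,
    show (2 * m + 1 + 1) / 2 = m + 1 from by omega] at hrow hatop hvp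
  have hrow' : ∀ i, i < 4 * m + 1 → i ≠ 2 * m →
      a (i + 2) - a (i + 1) ≤ a (i + 1) - a i := by
    intro i h1 h2
    have h := hrow i h1
    rw [if_neg (by omega)] at h
    omega
  have hdpb : a (2 * m + 2) - a (2 * m + 1) ≤ (a (2 * m + 1) - a (2 * m)) - b := by
    have h := hrow (2 * m) (by omega)
    rw [if_pos rfl] at h
    omega
  have chainL : ∀ t, ∀ j, j + t = 2 * m →
      a (2 * m + 1) - a (2 * m) ≤ a (j + 1) - a j := by
    intro t
    induction t with
    | zero =>
      intro j hj
      have hj' : j = 2 * m := by omega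
      subst hj'
      omega
    | succ t ih =>
      intro j hj
      have h1 := ih (j + 1) (by omega)
      have h2 := hrow' j (by omega) (by omega)
      have e : j + 1 + 1 = j + 2 := by omega
      rw [e] at h1
      omega
  have chainR : ∀ j, 2 * m + 1 ≤ j → j ≤ 4 * m + 1 →
      a (j + 1) - a j ≤ a (2 * m + 2) - a (2 * m + 1) := by
    intro j hj
    induction j, hj using Nat.le_induction with
    | base =>
      intro _
      have e : 2 * m + 1 + 1 = 2 * m + 2 := by omega
      rw [e]
    | succ j hj ih =>
      intro h
      have h1 := ih (by omega)
      have h2 := hrow' j (by omega) (by omega)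
      have e : j + 1 + 1 = j + 2 := by omega
      rw [e]
      omega
  have sfx : ∀ t, t ≤ 2 * m + 1 →
      a (2 * m + 1 + t) ≤ a (2 * m + 1) + (t : ℤ) * (a (2 * m + 2) - a (2 * m + 1)) := by
    intro t
    induction t with
    | zero => intro _; simp
    | succ t ih =>
      intro ht
      have h1 := ih (by omega)
      have h2 := chainR (2 * m + 1 + t) (by omega) (by omega)
      have e : 2 * m + 1 + (t + 1) = (2 * m + 1 + t) + 1 := by omega
      rw [e]
      push_cast
      nlinarith [h1, h2]
  have prefix_lb : ∀ k, k ≤ 2 * m + 1 →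
      (k : ℤ) * (a (2 * m + 1) - a (2 * m)) ≤ a k := by
    intro k
    induction k with
    | zero => intro _; simp [ha0]
    | succ k ih =>
      intro hk
      have h1 := ih (by omega)
      have h2 := chainL (2 * m - k) k (by omega)
      push_cast
      nlinarith [h1, h2]
  have hb1 : (1 : ℤ) ≤ b := by
    by_contra hb1
    have hb0 : b = 0 := by omega
    have hap : a (2 * m + 1) = 0 := by
      rw [hb0] at hvp
      simp only [mul_zero] at hvp
      have := hpos (2 * m + 1)
      omega
    have L1 : ∀ t, t ≤ 2 * m + 1 → a (2 * m + 1 - t) = 0 := by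
      intro t
      induction t using Nat.strong_induction_on with
      | _ t ih =>
        intro ht
        rcases t with _ | t
        · simpa using hap
        rcases t with _ | t
        · have h := hrow (2 * m) (by omega)
          rw [if_pos rfl, hb0] at h
          have h1 := hpos (2 * m)
          have h2 := hpos (2 * m + 2)
          have e : 2 * m + 1 - 1 = 2 * m := by omega
          rw [e]
          omega
        · rw [show 2 * m + 1 - (t + 1 + 1) = 2 * m + 1 - (t + 2) from by omega]
          have i0 := ih t (by omega) (by omega)
          have i1 := ih (t + 1) (by omega) (by omega)
          have h := hrow (2 * m + 1 - (t + 2)) (by omega)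
          rw [if_neg (by omega)] at h
          have e1 : 2 * m + 1 - (t + 2) + 1 = 2 * m + 1 - (t + 1) := by omega
          have e2 : 2 * m + 1 - (t + 2) + 2 = 2 * m + 1 - t := by omega
          rw [e1, e2] at h
          have h1 := hpos (2 * m + 1 - (t + 2))
          omega
    have L2 : ∀ t, t ≤ 2 * m + 1 → a (2 * m + 1 + t) = 0 := by
      intro t
      induction t using Nat.strong_induction_on with
      | _ t ih =>
        intro ht
        rcases t with _ | t
        · simpa using hap
        rcases t with _ | t
        · have h := hrow (2 * m) (by omega)
          rw [if_pos rfl, hb0] at h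
          have h1 := hpos (2 * m)
          have h2 := hpos (2 * m + 2)
          have e : 2 * m + 1 + 1 = 2 * m + 2 := by omega
          rw [e]
          omega
        · rw [show 2 * m + 1 + (t + 1 + 1) = 2 * m + 1 + (t + 2) from by omega]
          have i0 := ih t (by omega) (by omega)
          have i1 := ih (t + 1) (by omega) (by omega)
          have h := hrow (2 * m + 1 + t) (by omega)
          rw [if_neg (by omega)] at h
          have e1 : 2 * m + 1 + t + 1 = 2 * m + 1 + (t + 1) := by omega
          have e2 : 2 * m + 1 + t + 2 = 2 * m + 1 + (t + 2) := by omega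
          rw [e1, e2] at h
          have h1 := hpos (2 * m + 1 + (t + 2))
          omega
    rcases hnz with h | ⟨k, hk⟩
    · exact h hb0
    · apply hk
      rcases le_or_gt k (2 * m + 1) with h | h
      · have hh := L1 (2 * m + 1 - k) (by omega)
        rwa [show 2 * m + 1 - (2 * m + 1 - k) = k from by omega] at hh
      · rcases le_or_gt k (4 * m + 2) with h2 | h2
        · have hh := L2 (k - (2 * m + 1)) (by omega)
          rwa [show 2 * m + 1 + (k - (2 * m + 1)) = k from by omega] at hh
        · exact hatop k (by omega)
  have hD1 : 1 ≤ a (2 * m + 1) - a (2 * m) := by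
    by_contra h
    push_neg at h
    have hDp : a (2 * m + 2) - a (2 * m + 1) ≤ -b := by omega
    have h2 := sfx (2 * m + 1) le_rfl
    rw [show 2 * m + 1 + (2 * m + 1) = 4 * m + 2 from by omega,
      hatop (4 * m + 2) le_rfl] at h2
    push_cast at h2 hvp
    have hmul : (2 * (m : ℤ) + 1) * (a (2 * m + 2) - a (2 * m + 1))
        ≤ (2 * (m : ℤ) + 1) * (-b) :=
      mul_le_mul_of_nonneg_left hDp (by positivity)
    have hm1' : (1 : ℤ) ≤ (m : ℤ) := by exact_mod_cast hm1
    have hmb : (1 : ℤ) ≤ (m : ℤ) * b := by nlinarith [hb1]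
    linarith [h2, hmul, hvp, hmb]
  have hk_lb : ∀ k, k ≤ 2 * m + 1 → (k : ℤ) ≤ a k := by
    intro k hk
    have h1 := prefix_lb k hk
    have hk0 : (0 : ℤ) ≤ (k : ℤ) := by positivity
    nlinarith [h1, hD1, hk0]
  have hb2 : 2 ≤ b := by
    have hap := hk_lb (2 * m + 1) le_rfl
    push_cast at hap hvp
    by_contra hb2
    push_neg at hb2
    have hble : b ≤ 1 := by omega
    have hm1' : (1 : ℤ) ≤ (m : ℤ) := by exact_mod_cast hm1
    have hmul : ((m : ℤ) + 1) * b ≤ ((m : ℤ) + 1) * 1 :=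
      mul_le_mul_of_nonneg_left hble (by positivity)
    linarith [hap, hvp, hmul, hm1']
  have hdq : a (2 * m + 2) - a (2 * m + 1) ≤ -1 := by
    by_contra h
    push_neg at h
    have hD : b ≤ a (2 * m + 1) - a (2 * m) := by omega
    have h1 := prefix_lb (2 * m + 1) le_rfl
    push_cast at h1 hvp
    have hmul : (2 * (m : ℤ) + 1) * b ≤ (2 * (m : ℤ) + 1) * (a (2 * m + 1) - a (2 * m)) :=
      mul_le_mul_of_nonneg_left hD (by positivity)
    have hm1' : (1 : ℤ) ≤ (m : ℤ) := by exact_mod_cast hm1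
    have hmb : (1 : ℤ) ≤ (m : ℤ) * b := by nlinarith [hb1]
    linarith [h1, hvp, hmul, hmb]
  have G : ∀ u, u ≤ 2 * m + 1 → (u : ℤ) ≤ a (4 * m + 2 - u) := by
    intro u
    induction u with
    | zero =>
      intro _
      rw [show 4 * m + 2 - 0 = 4 * m + 2 from by omega, hatop (4 * m + 2) le_rfl]
      simp
    | succ u ih =>
      intro hu
      have h1 := ih (by omega)
      have h2 := chainR (4 * m + 1 - u) (by omega) (by omega)
      rw [show 4 * m + 1 - u + 1 = 4 * m + 2 - u from by omega] at h2
      rw [show 4 * m + 2 - (u + 1) = 4 * m + 1 - u from by omega]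
      omega
  refine ⟨hb2, fun k h1 h2 => ?_⟩
  rcases le_or_gt k (2 * m + 1) with hk | hk
  · have := hk_lb k hk
    omega
  · have h3 := G (4 * m + 2 - k) (by omega)
    rw [show 4 * m + 2 - (4 * m + 2 - k) = k from by omega] at h3
    omega

/-- **Fundamental and canonical cycles of the generalized `E₆` intersection matrix.**
Let `p` be an odd prime and `N` the intersection matrix of a chain of `2p−1` vertices of
self-intersection `−2` together with one extra vertex of self-intersection `−(p+1)/2` joined to
the middle vertex of the chain.  Let `Z` have entries `min(i, 2p−i)` on the chain and `2` at the
extra vertex.  Then `N·Z = −e_v`, `Z` is the fundamental cycle, `ᵀZ·N·Z = −2`, and the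
canonical cycle is `−((p−3)/2)·Z`. -/
theorem generalized_E6_cycles (p : ℕ) (hp : p.Prime) (hodd : Odd p)
    (N : Matrix (Option (Fin (2 * p - 1))) (Option (Fin (2 * p - 1))) ℤ)
    (hNc : ∀ i j : Fin (2 * p - 1), N (some i) (some j) =
      if i = j then -2 else if (i : ℕ) + 1 = (j : ℕ) ∨ (j : ℕ) + 1 = (i : ℕ) then 1 else 0)
    (hNv : N none none = -(((p + 1) / 2 : ℕ) : ℤ))
    (hNe : ∀ i : Fin (2 * p - 1), N none (some i) = if (i : ℕ) + 1 = p then 1 else 0)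
    (hNe' : ∀ i : Fin (2 * p - 1), N (some i) none = if (i : ℕ) + 1 = p then 1 else 0)
    (Z : Option (Fin (2 * p - 1)) → ℤ)
    (hZc : ∀ i : Fin (2 * p - 1),
      Z (some i) = min (((i : ℕ) : ℤ) + 1) ((2 * p : ℤ) - (((i : ℕ) : ℤ) + 1)))
    (hZv : Z none = 2) :
    N.mulVec Z = (fun x => if x = none then -1 else 0) ∧
    IsFundCycle N Z ∧
    Z ⬝ᵥ N.mulVec Z = -2 ∧
    N.mulVec (fun x => -(((p - 3) / 2 : ℕ) : ℤ) * Z x) = (fun x => -N x x - 2) := by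
  have hpodd : p % 2 = 1 := Nat.odd_iff.mp hodd
  have hp3 : 3 ≤ p := by have := hp.two_le; omega
  have hAZ : ∀ k, k ≤ 2 * p → chainA p Z k = min (k : ℤ) (2 * (p : ℤ) - k) := by
    intro k hk
    rw [chainA]
    split_ifs with h
    · rw [hZc ⟨k - 1, by omega⟩]
      have hv : ((⟨k - 1, by omega⟩ : Fin (2 * p - 1)) : ℕ) = k - 1 := rfl
      rw [hv]
      omega
    · omega
  have hP1 : N.mulVec Z = (fun x => if x = none then -1 else 0) := by
    funext x
    cases x with
    | none =>
      rw [mulVec_none p hp3 N hNv hNe Z, hAZ p (by omega), hZv, if_pos rfl]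
      omega
    | some i =>
      have hi := i.isLt
      rw [mulVec_some p hp3 N hNc hNe' Z i, hAZ (i : ℕ) (by omega),
        hAZ ((i : ℕ) + 2) (by omega), hAZ ((i : ℕ) + 1) (by omega), hZv,
        if_neg (Option.some_ne_none i)]
      split_ifs with h <;> omega
  have hP3 : Z ⬝ᵥ N.mulVec Z = -2 := by
    rw [hP1]
    simp [dotProduct, Fintype.sum_option, hZv]
  have hP4 : N.mulVec (fun x => -(((p - 3) / 2 : ℕ) : ℤ) * Z x) = (fun x => -N x x - 2) := by
    have hs : (fun x => -(((p - 3) / 2 : ℕ) : ℤ) * Z x)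
        = (-(((p - 3) / 2 : ℕ) : ℤ)) • Z := rfl
    rw [hs, Matrix.mulVec_smul, hP1]
    funext x
    cases x with
    | none =>
      simp only [Pi.smul_apply, smul_eq_mul, hNv, if_true]
      have e : -(((p - 3) / 2 : ℕ) : ℤ) * (-1) = (((p - 3) / 2 : ℕ) : ℤ) := by ring
      rw [e]
      omega
    | some i =>
      simp only [Pi.smul_apply, smul_eq_mul, if_neg (Option.some_ne_none i)]
      rw [hNc i i, if_pos rfl]
      ring
  refine ⟨hP1, ⟨?_, ?_, ?_, ?_⟩, hP3, hP4⟩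
  · intro h
    have h2 := congrFun h none
    rw [hZv] at h2
    exact two_ne_zero h2
  · intro x
    cases x with
    | none => rw [hZv]; norm_num
    | some i =>
      have hi := i.isLt
      rw [hZc i]
      omega
  · intro x
    rw [hP1]
    show (if x = none then (-1 : ℤ) else 0) ≤ 0
    split_ifs <;> norm_num
  · intro Z' hne hposz' hle x
    have hbz := hposz' none
    have hrowz : ∀ i, i < 2 * p - 1 → chainA p Z' i + chainA p Z' (i + 2)
        + (if i + 1 = p then Z' none else 0) ≤ 2 * chainA p Z' (i + 1) := by
      intro i hi
      have h := hle (some ⟨i, hi⟩)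
      rw [mulVec_some p hp3 N hNc hNe' Z' ⟨i, hi⟩] at h
      have hv : ((⟨i, hi⟩ : Fin (2 * p - 1)) : ℕ) = i := rfl
      rw [hv] at h
      omega
    have hvpz : chainA p Z' p ≤ (((p + 1) / 2 : ℕ) : ℤ) * Z' none := by
      have h := hle none
      rw [mulVec_none p hp3 N hNv hNe Z'] at h
      linarith
    have hposz : ∀ k, 0 ≤ chainA p Z' k := by
      intro k
      rw [chainA]
      split_ifs
      exacts [hposz' _, le_refl 0]
    have ha0z : chainA p Z' 0 = 0 := by rw [chainA, dif_neg (by omega)]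
    have hatopz : ∀ k, 2 * p ≤ k → chainA p Z' k = 0 := fun k hk => by
      rw [chainA, dif_neg (by omega)]
    have hnzz : Z' none ≠ 0 ∨ ∃ k, chainA p Z' k ≠ 0 := by
      by_contra hc
      push_neg at hc
      apply hne
      funext y
      cases y with
      | none => simpa using hc.1
      | some i =>
        have hh := hc.2 ((i : ℕ) + 1)
        rw [chainA_succ p Z' i] at hh
        simpa using hh
    obtain ⟨hb2, hbound⟩ := aux_main p hp3 hpodd (chainA p Z') (Z' none)
      hposz hbz ha0z hatopz hrowz hvpz hnzz
    cases x with
    | none => rw [hZv]; exact hb2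
    | some i =>
      have hi := i.isLt
      rw [hZc i, ← chainA_succ p Z' i]
      have hbnd := hbound ((i : ℕ) + 1) (by omega) (by omega)
      omega
end

section
/- Let p be a prime and let N be the intersection matrix of size n = 1 + (p+1)(p−1) whose graph is star-shaped with a central node v_0 of self-intersection −p and p+1 chains attached to v_0 by single edges, each chain consisting of p−1 vertices of self-intersection −2 (each chain submatrix is tridiagonal with diagonal −2 and sub/super-diagonal entries 1). Let Z ∈ ℤ^n be the vector with entry p at v_0 and entries p−1, p−2, …, 1 along each chain, decreasing away from the node. Then: N·Z = −e_{v_0}; Z is the fundamental cycle of N; ᵀZ·N·Z = −p; the canonical cycle of N equals −(p−2)·Z, i.e., N·(−(p−2)·Z) = H_0; and |det(N)| = p^p. -/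
open Matrix BigOperators

namespace GenD4

variable {p : ℕ} {N : Matrix (Option (Fin (p+1) × Fin (p-1))) (Option (Fin (p+1) × Fin (p-1))) ℤ}

def Aa (p : ℕ) (W : Option (Fin (p + 1) × Fin (p - 1)) → ℤ) (j : Fin (p + 1)) (i : ℕ) : ℤ :=
  if i = 0 then W none else if h : i - 1 < p - 1 then W (some (j, ⟨i - 1, h⟩)) else 0

lemma Aa_zero (W) (j : Fin (p+1)) : Aa p W j 0 = W none := rfl

lemma Aa_succ (W) (j : Fin (p+1)) {i : ℕ} (h : i < p - 1) :
    Aa p W j (i + 1) = W (some (j, ⟨i, h⟩)) := by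
  simp only [Aa, Nat.add_sub_cancel, if_neg (Nat.succ_ne_zero i)]
  rw [dif_pos h]

lemma Aa_succ' (W) (j : Fin (p+1)) (i : Fin (p - 1)) :
    Aa p W j ((i : ℕ) + 1) = W (some (j, i)) := by
  rw [Aa_succ W j i.isLt]

lemma Aa_of_ge (W) (j : Fin (p+1)) {i : ℕ} (h2 : 2 ≤ p) (h : p ≤ i) : Aa p W j i = 0 := by
  unfold Aa
  rw [if_neg (by omega), dif_neg (by omega)]

lemma sum_ind (a : ℕ) (f : Fin (p - 1) → ℤ) :
    (∑ i : Fin (p - 1), (if (i : ℕ) = a then 1 else 0) * f i) =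
      if h : a < p - 1 then f ⟨a, h⟩ else 0 := by
  by_cases h : a < p - 1
  · rw [dif_pos h]
    rw [Finset.sum_eq_single (⟨a, h⟩ : Fin (p - 1))]
    · simp
    · intro b _ hb
      rw [if_neg (by simpa [Fin.ext_iff] using hb), zero_mul]
    · simp
  · rw [dif_neg h]
    apply Finset.sum_eq_zero
    intro i _
    rw [if_neg (by omega), zero_mul]

lemma sum_ind' (a : ℕ) (f : Fin (p - 1) → ℤ) (W) (j : Fin (p+1))
    (hf : ∀ i, f i = W (some (j, i))) :
    (∑ i : Fin (p - 1), (if (i : ℕ) = a then 1 else 0) * f i) = Aa p W j (a + 1) := by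
  rw [sum_ind]
  by_cases h : a < p - 1
  · rw [dif_pos h, hf, Aa_succ]
  · rw [dif_neg h]
    unfold Aa
    rw [if_neg (by omega), dif_neg (by omega)]

lemma mulVec_some (h2 : 2 ≤ p)
    (hNe' : ∀ (j : Fin (p + 1)) (i : Fin (p - 1)),
      N (some (j, i)) none = if (i : ℕ) = 0 then 1 else 0)
    (hNc : ∀ (j j' : Fin (p + 1)) (i i' : Fin (p - 1)),
      N (some (j, i)) (some (j', i')) =
        if j = j' then
          (if i = i' then -2
            else if (i : ℕ) + 1 = (i' : ℕ) ∨ (i' : ℕ) + 1 = (i : ℕ) then 1 else 0)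
        else 0)
    (W : Option (Fin (p+1) × Fin (p-1)) → ℤ) (j : Fin (p+1)) (r : Fin (p-1)) :
    N.mulVec W (some (j, r)) =
      Aa p W j (r : ℕ) - 2 * Aa p W j ((r : ℕ) + 1) + Aa p W j ((r : ℕ) + 2) := by
  simp only [Matrix.mulVec, dotProduct]
  rw [Fintype.sum_option, Fintype.sum_prod_type]
  rw [Finset.sum_eq_single_of_mem j (Finset.mem_univ j) (by
    intro b _ hb
    apply Finset.sum_eq_zero
    intro i' _
    rw [hNc, if_neg (Ne.symm hb), zero_mul])]
  have key : ∀ i' : Fin (p-1), N (some (j, r)) (some (j, i')) =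
      (if (i' : ℕ) = (r : ℕ) then -2 else 0) + (if (i' : ℕ) = (r : ℕ) + 1 then 1 else 0)
        + (if (i' : ℕ) + 1 = (r : ℕ) then 1 else 0) := by
    intro i'
    rw [hNc, if_pos rfl]
    simp only [Fin.ext_iff]
    split_ifs <;> omega
  simp only [key, add_mul]
  rw [Finset.sum_add_distrib, Finset.sum_add_distrib]
  have s1 : (∑ i' : Fin (p-1), (if (i' : ℕ) = (r : ℕ) then (-2:ℤ) else 0) * W (some (j, i')))
      = -2 * Aa p W j ((r : ℕ) + 1) := by
    have : ∀ i' : Fin (p-1), (if (i' : ℕ) = (r : ℕ) then (-2:ℤ) else 0) * W (some (j, i'))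
        = -2 * ((if (i' : ℕ) = (r : ℕ) then (1:ℤ) else 0) * W (some (j, i'))) := by
      intro i'; split_ifs <;> ring
    simp only [this, ← Finset.mul_sum]
    rw [sum_ind' (r : ℕ) _ W j (fun _ => rfl)]
  have s2 : (∑ i' : Fin (p-1), (if (i' : ℕ) = (r : ℕ) + 1 then (1:ℤ) else 0) * W (some (j, i')))
      = Aa p W j ((r : ℕ) + 2) := by
    rw [sum_ind' ((r : ℕ) + 1) _ W j (fun _ => rfl)]
  have s3 : (N (some (j, r)) none * W none) +
      (∑ i' : Fin (p-1), (if (i' : ℕ) + 1 = (r : ℕ) then (1:ℤ) else 0) * W (some (j, i')))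
      = Aa p W j (r : ℕ) := by
    rw [hNe']
    by_cases hr : (r : ℕ) = 0
    · rw [if_pos hr]
      rw [Finset.sum_eq_zero (fun i _ => by rw [if_neg (by omega), zero_mul])]
      rw [hr, Aa_zero]; ring
    · rw [if_neg hr, zero_mul, zero_add]
      have : ∀ i' : Fin (p-1), (if (i' : ℕ) + 1 = (r : ℕ) then (1:ℤ) else 0)
          = (if (i' : ℕ) = (r : ℕ) - 1 then (1:ℤ) else 0) := by
        intro i'; split_ifs <;> omega
      simp only [this]
      rw [sum_ind' ((r : ℕ) - 1) _ W j (fun _ => rfl)]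
      congr 1
      omega
  rw [s1, s2]
  linarith [s3]

lemma mulVec_none (h2 : 2 ≤ p)
    (hNv : N none none = -(p : ℤ))
    (hNe : ∀ (j : Fin (p + 1)) (i : Fin (p - 1)),
      N none (some (j, i)) = if (i : ℕ) = 0 then 1 else 0)
    (W : Option (Fin (p+1) × Fin (p-1)) → ℤ) :
    N.mulVec W none = -(p : ℤ) * W none + ∑ j : Fin (p+1), Aa p W j 1 := by
  simp only [Matrix.mulVec, dotProduct]
  rw [Fintype.sum_option, Fintype.sum_prod_type, hNv]
  congr 1
  apply Finset.sum_congr rfl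
  intro j _
  simp only [hNe]
  exact sum_ind' 0 _ W j (fun _ => rfl)

lemma AaZ (h2 : 2 ≤ p) (Z : Option (Fin (p+1) × Fin (p-1)) → ℤ)
    (hZv : Z none = (p : ℤ))
    (hZc : ∀ (j : Fin (p + 1)) (i : Fin (p - 1)),
      Z (some (j, i)) = (p : ℤ) - 1 - ((i : ℕ) : ℤ))
    (j : Fin (p+1)) {i : ℕ} (h : i ≤ p) : Aa p Z j i = (p : ℤ) - (i : ℤ) := by
  unfold Aa
  by_cases h0 : i = 0
  · rw [if_pos h0, hZv, h0]; simp
  · rw [if_neg h0]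
    by_cases h1 : i - 1 < p - 1
    · rw [dif_pos h1, hZc]
      have : ((i - 1 : ℕ) : ℤ) = (i : ℤ) - 1 := by omega
      rw [this]; ring
    · rw [dif_neg h1]
      have : i = p := by omega
      rw [this]; ring

lemma NZ_eq (h2 : 2 ≤ p)
    (hNv : N none none = -(p : ℤ))
    (hNe : ∀ (j : Fin (p + 1)) (i : Fin (p - 1)),
      N none (some (j, i)) = if (i : ℕ) = 0 then 1 else 0)
    (hNe' : ∀ (j : Fin (p + 1)) (i : Fin (p - 1)),
      N (some (j, i)) none = if (i : ℕ) = 0 then 1 else 0)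
    (hNc : ∀ (j j' : Fin (p + 1)) (i i' : Fin (p - 1)),
      N (some (j, i)) (some (j', i')) =
        if j = j' then
          (if i = i' then -2
            else if (i : ℕ) + 1 = (i' : ℕ) ∨ (i' : ℕ) + 1 = (i : ℕ) then 1 else 0)
        else 0)
    (Z : Option (Fin (p+1) × Fin (p-1)) → ℤ)
    (hZv : Z none = (p : ℤ))
    (hZc : ∀ (j : Fin (p + 1)) (i : Fin (p - 1)),
      Z (some (j, i)) = (p : ℤ) - 1 - ((i : ℕ) : ℤ)) :
    N.mulVec Z = (fun x => if x = none then -1 else 0) := by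
  funext x
  match x with
  | none =>
    rw [mulVec_none h2 hNv hNe Z, hZv, if_pos rfl]
    rw [Finset.sum_congr rfl (fun j _ => AaZ h2 Z hZv hZc j (by omega : 1 ≤ p))]
    rw [Finset.sum_const, Finset.card_univ, Fintype.card_fin, nsmul_eq_mul]
    push_cast
    ring
  | some (j, r) =>
    rw [mulVec_some h2 hNe' hNc Z j r, if_neg (by simp)]
    have hr : (r : ℕ) < p - 1 := r.isLt
    rw [AaZ h2 Z hZv hZc j (by omega : (r:ℕ) ≤ p),
        AaZ h2 Z hZv hZc j (by omega : (r:ℕ)+1 ≤ p),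
        AaZ h2 Z hZv hZc j (by omega : (r:ℕ)+2 ≤ p)]
    push_cast
    ring

lemma minimal (h2 : 2 ≤ p)
    (hNv : N none none = -(p : ℤ))
    (hNe : ∀ (j : Fin (p + 1)) (i : Fin (p - 1)),
      N none (some (j, i)) = if (i : ℕ) = 0 then 1 else 0)
    (hNe' : ∀ (j : Fin (p + 1)) (i : Fin (p - 1)),
      N (some (j, i)) none = if (i : ℕ) = 0 then 1 else 0)
    (hNc : ∀ (j j' : Fin (p + 1)) (i i' : Fin (p - 1)),
      N (some (j, i)) (some (j', i')) =
        if j = j' then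
          (if i = i' then -2
            else if (i : ℕ) + 1 = (i' : ℕ) ∨ (i' : ℕ) + 1 = (i : ℕ) then 1 else 0)
        else 0)
    (Z' : Option (Fin (p+1) × Fin (p-1)) → ℤ)
    (hne : Z' ≠ 0) (hpos : ∀ i, 0 ≤ Z' i) (hle : ∀ i, N.mulVec Z' i ≤ 0) :
    (p : ℤ) ≤ Z' none ∧ ∀ (j : Fin (p+1)) (i : Fin (p-1)),
      (p : ℤ) - 1 - ((i : ℕ) : ℤ) ≤ Z' (some (j, i)) := by
  set g : Fin (p+1) → ℕ → ℤ := fun j i => Aa p Z' j i with hg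
  set c : ℤ := Z' none with hc
  have hg0 : ∀ j, g j 0 = c := fun j => rfl
  have hgnn : ∀ j i, 0 ≤ g j i := by
    intro j i
    show (0:ℤ) ≤ Aa p Z' j i
    unfold Aa
    split_ifs
    · exact hpos _
    · exact hpos _
    · exact le_refl 0
  have hgp : ∀ j i, p ≤ i → g j i = 0 := fun j i hi => Aa_of_ge Z' j h2 hi
  have hconc : ∀ j i, 1 ≤ i → i ≤ p - 1 → g j (i-1) + g j (i+1) ≤ 2 * g j i := by
    intro j i hi1 hi2
    have hlt : i - 1 < p - 1 := by omega
    have h := hle (some (j, ⟨i-1, hlt⟩))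
    rw [mulVec_some h2 hNe' hNc Z' j ⟨i-1, hlt⟩] at h
    simp only at h
    have e1 : i - 1 + 1 = i := by omega
    have e2 : i - 1 + 2 = i + 1 := by omega
    rw [e1, e2] at h
    show Aa p Z' j (i-1) + Aa p Z' j (i+1) ≤ 2 * Aa p Z' j i
    linarith
  set d : Fin (p+1) → ℕ → ℤ := fun j i => g j i - g j (i+1) with hd
  have hmono : ∀ j k, k ≤ p - 1 → ∀ i, i ≤ k → d j i ≤ d j k := by
    intro j k
    induction k with
    | zero => intro _ i hi; interval_cases i; exact le_refl _
    | succ k ih =>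
      intro hk i hi
      rcases Nat.lt_or_ge i (k+1) with h | h
      · have h1 : g j i - g j (i+1) ≤ g j k - g j (k+1) := ih (by omega) i (by omega)
        have h3 := hconc j (k+1) (by omega) hk
        have e1 : k + 1 - 1 = k := by omega
        rw [e1] at h3
        show g j i - g j (i+1) ≤ g j (k+1) - g j (k+1+1)
        linarith
      · have : i = k + 1 := by omega
        rw [this]
  have hsum : ∀ j, ∑ i ∈ Finset.range p, d j i = c := by
    intro j
    rw [Finset.sum_range_sub' (g j) p, hg0, hgp j p (le_refl p), sub_zero]
  have hnode : -(p : ℤ) * c + ∑ j, g j 1 ≤ 0 := by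
    have h := hle none
    rwa [mulVec_none h2 hNv hNe Z'] at h
  have hc0 : 0 ≤ c := hpos none
  have hc1 : 1 ≤ c := by
    by_contra hcon
    have hceq : c = 0 := by omega
    have hg1 : ∀ j, g j 1 = 0 := by
      have hs : ∑ j, g j 1 ≤ 0 := by rw [hceq] at hnode; linarith
      intro j
      have := Finset.sum_nonneg (fun j (_ : j ∈ Finset.univ) => hgnn j 1)
      have heq : ∑ j, g j 1 = 0 := le_antisymm hs this
      have := (Finset.sum_eq_zero_iff_of_nonneg
        (fun j (_ : j ∈ Finset.univ) => hgnn j 1)).mp heq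
      exact this j (Finset.mem_univ j)
    have hall : ∀ j i, g j i = 0 := by
      intro j i
      induction i using Nat.strong_induction_on with
      | _ i ih =>
        match i with
        | 0 => rw [hg0]; exact hceq
        | 1 => exact hg1 j
        | (k+2) =>
          by_cases hk : k + 1 ≤ p - 1
          · have h := hconc j (k+1) (by omega) hk
            have e1 : k + 1 - 1 = k := by omega
            rw [e1, ih k (by omega), ih (k+1) (by omega)] at h
            have := hgnn j (k+2)
            linarith
          · exact hgp j (k+2) (by omega)
    apply hne
    funext x
    match x with
    | none => exact hceq
    | some (j, i) =>
      have h' : Aa p Z' j ((i : ℕ) + 1) = 0 := hall j ((i : ℕ) + 1)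
      rw [Aa_succ'] at h'
      simpa using h' 
  have hd0sum : c ≤ ∑ j, d j 0 := by
    have e : ∀ j : Fin (p+1), d j 0 = c - g j 1 := by
      intro j; show g j 0 - g j 1 = c - g j 1; rw [hg0]
    rw [Finset.sum_congr rfl (fun j _ => e j), Finset.sum_sub_distrib,
      Finset.sum_const, Finset.card_univ, Fintype.card_fin, nsmul_eq_mul]
    push_cast
    linarith
  obtain ⟨j0, hj0⟩ : ∃ j0, 1 ≤ d j0 0 := by
    by_contra hcon
    push_neg at hcon
    have : ∑ j, d j 0 ≤ 0 :=
      Finset.sum_nonpos (fun j _ => by have := hcon j; omega)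
    omega
  have hcp : (p : ℤ) ≤ c := by
    have h1 : ∀ i ∈ Finset.range p, (1:ℤ) ≤ d j0 i := by
      intro i hi
      have hi' : i ≤ p - 1 := by
        have := Finset.mem_range.mp hi; omega
      exact le_trans hj0 (hmono j0 i hi' 0 (Nat.zero_le i))
    calc (p : ℤ) = ∑ _i ∈ Finset.range p, (1:ℤ) := by
          rw [Finset.sum_const, Finset.card_range, nsmul_eq_mul]; ring
      _ ≤ ∑ i ∈ Finset.range p, d j0 i := Finset.sum_le_sum h1
      _ = c := hsum j0
  have hmain : ∀ j i, i ≤ p → (p : ℤ) - (i : ℤ) ≤ g j i := by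
    intro j i hi
    by_contra hcon
    push_neg at hcon
    have hi1 : 1 ≤ i := by
      by_contra h
      have : i = 0 := by omega
      rw [this, hg0] at hcon
      simp at hcon
      linarith
    have hip : i ≤ p - 1 := by
      by_contra h
      have : i = p := by omega
      rw [this, hgp j p (le_refl p)] at hcon
      simp at hcon
    have hsumk : (i : ℤ) + 1 ≤ ∑ k ∈ Finset.range i, d j k := by
      have : ∑ k ∈ Finset.range i, d j k = c - g j i := by
        rw [Finset.sum_range_sub' (g j) i, hg0]
      rw [this]
      have : g j i ≤ (p : ℤ) - (i : ℤ) - 1 := by omega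
      linarith
    obtain ⟨i0, hi0lt, hi0⟩ : ∃ i0, i0 < i ∧ 2 ≤ d j i0 := by
      by_contra hcon2
      push_neg at hcon2
      have : ∑ k ∈ Finset.range i, d j k ≤ ∑ _k ∈ Finset.range i, (1:ℤ) :=
        Finset.sum_le_sum (fun k hk => by
          have := hcon2 k (Finset.mem_range.mp hk); omega)
      rw [Finset.sum_const, Finset.card_range, nsmul_eq_mul, mul_one] at this
      omega
    have hIco : g j i = ∑ k ∈ Finset.Ico i p, d j k := by
      rw [Finset.sum_Ico_eq_sub _ (by omega : i ≤ p), hsum j,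
        Finset.sum_range_sub' (g j) i, hg0]
      ring
    have hlb : 2 * ((p : ℤ) - (i : ℤ)) ≤ ∑ k ∈ Finset.Ico i p, d j k := by
      have h1 : ∀ k ∈ Finset.Ico i p, (2:ℤ) ≤ d j k := by
        intro k hk
        obtain ⟨hk1, hk2⟩ := Finset.mem_Ico.mp hk
        exact le_trans hi0 (hmono j k (by omega) i0 (by omega))
      calc 2 * ((p : ℤ) - (i : ℤ)) = ∑ _k ∈ Finset.Ico i p, (2:ℤ) := by
            rw [Finset.sum_const, Nat.card_Ico, nsmul_eq_mul]
            push_cast [Nat.cast_sub (by omega : i ≤ p)]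
            ring
        _ ≤ _ := Finset.sum_le_sum h1
    rw [hIco] at hcon
    have : (1:ℤ) ≤ (p : ℤ) - (i : ℤ) := by
      have : i + 1 ≤ p := by omega
      omega
    linarith
  refine ⟨hcp, fun j i => ?_⟩
  have h := hmain j ((i : ℕ) + 1) (by have := i.isLt; omega)
  have h' : (p : ℤ) - (((i : ℕ) + 1 : ℕ) : ℤ) ≤ Aa p Z' j ((i : ℕ) + 1) := h
  rw [Aa_succ'] at h'
  push_cast at h'
  linarith




lemma sum_ind_g (m a : ℕ) (f : Fin m → ℤ) :
    (∑ i : Fin m, (if (i : ℕ) = a then 1 else 0) * f i) =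
      if h : a < m then f ⟨a, h⟩ else 0 := by
  by_cases h : a < m
  · rw [dif_pos h, Finset.sum_eq_single (⟨a, h⟩ : Fin m)]
    · simp
    · intro b _ hb
      rw [if_neg (by simpa [Fin.ext_iff] using hb), zero_mul]
    · simp
  · rw [dif_neg h]
    exact Finset.sum_eq_zero fun i _ => by rw [if_neg (by omega), zero_mul]

def Cm (m : ℕ) : Matrix (Fin m) (Fin m) ℤ := fun i i' =>
  if i = i' then -2 else if (i : ℕ) + 1 = (i' : ℕ) ∨ (i' : ℕ) + 1 = (i : ℕ) then 1 else 0

def Vm (m : ℕ) : Matrix (Fin m) (Fin m) ℤ := fun i k =>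
  if (i : ℕ) ≤ (k : ℕ) then (i : ℕ) + 1 else 0

def Lm (m : ℕ) : Matrix (Fin m) (Fin m) ℤ := fun i k =>
  if (i : ℕ) = (k : ℕ) then -((k : ℕ) : ℤ) - 2
  else if (k : ℕ) + 1 = (i : ℕ) then ((k : ℕ) : ℤ) + 1 else 0

lemma vv_bound (m : ℕ) (a : ℕ) (k : Fin m) (h : m ≤ a) :
    (if a ≤ (k : ℕ) then ((a : ℕ) : ℤ) + 1 else 0) = 0 :=
  if_neg (by have := k.isLt; omega)

lemma CV_eq (m : ℕ) : Cm m * Vm m = Lm m := by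
  ext i k
  rw [Matrix.mul_apply]
  have key : ∀ l : Fin m, Cm m i l =
      (if (l : ℕ) = (i : ℕ) then -2 else 0) + (if (l : ℕ) = (i : ℕ) + 1 then 1 else 0)
        + (if (l : ℕ) + 1 = (i : ℕ) then 1 else 0) := by
    intro l
    unfold Cm
    simp only [Fin.ext_iff]
    split_ifs <;> omega
  simp only [key, add_mul]
  rw [Finset.sum_add_distrib, Finset.sum_add_distrib]
  have s1 : (∑ l : Fin m, (if (l : ℕ) = (i : ℕ) then (-2:ℤ) else 0) * Vm m l k)
      = -2 * (if (i : ℕ) ≤ (k : ℕ) then ((i : ℕ) : ℤ) + 1 else 0) := by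
    have e : ∀ l : Fin m, (if (l : ℕ) = (i : ℕ) then (-2:ℤ) else 0) * Vm m l k
        = -2 * ((if (l : ℕ) = (i : ℕ) then (1:ℤ) else 0) * Vm m l k) := by
      intro l; split_ifs <;> ring
    simp only [e, ← Finset.mul_sum]
    rw [sum_ind_g m (i : ℕ) (fun l => Vm m l k), dif_pos i.isLt]
    rfl
  have s2 : (∑ l : Fin m, (if (l : ℕ) = (i : ℕ) + 1 then (1:ℤ) else 0) * Vm m l k)
      = (if (i : ℕ) + 1 ≤ (k : ℕ) then ((i : ℕ) : ℤ) + 1 + 1 else 0) := by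
    rw [sum_ind_g m ((i : ℕ) + 1) (fun l => Vm m l k)]
    by_cases h : (i : ℕ) + 1 < m
    · rw [dif_pos h]
      show (if (i : ℕ) + 1 ≤ (k : ℕ) then ((i : ℕ) + 1 : ℕ) + 1 else 0 : ℤ) = _
      push_cast
      split_ifs <;> ring
    · rw [dif_neg h]
      rw [if_neg (by have := k.isLt; omega)]
  have s3 : (∑ l : Fin m, (if (l : ℕ) + 1 = (i : ℕ) then (1:ℤ) else 0) * Vm m l k)
      = (if 1 ≤ (i : ℕ) ∧ (i : ℕ) - 1 ≤ (k : ℕ) then ((i : ℕ) : ℤ) else 0) := by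
    have e : ∀ l : Fin m, (if (l : ℕ) + 1 = (i : ℕ) then (1:ℤ) else 0)
        = (if (l : ℕ) = (i : ℕ) - 1 ∧ 1 ≤ (i : ℕ) then (1:ℤ) else 0) := by
      intro l; split_ifs <;> omega
    simp only [e]
    by_cases hi : 1 ≤ (i : ℕ)
    · simp only [hi, and_true]
      rw [sum_ind_g m ((i : ℕ) - 1) (fun l => Vm m l k), dif_pos (by have := i.isLt; omega)]
      show (if (i : ℕ) - 1 ≤ (k : ℕ) then ((i : ℕ) - 1 : ℕ) + 1 else 0 : ℤ) = _
      have hc : (((i : ℕ) - 1 : ℕ) : ℤ) + 1 = ((i : ℕ) : ℤ) := by omega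
      rw [hc]
      simp [hi]
    · simp only [hi, and_false, if_false]
      rw [Finset.sum_eq_zero (fun l _ => zero_mul _)]
      simp
  rw [s1, s2, s3]
  unfold Lm
  have hik := i.isLt
  have hkk := k.isLt
  split_ifs <;> omega

lemma Vm_tri (m : ℕ) : (Vm m).BlockTriangular id := by
  intro i k h
  exact if_neg (by simpa using (by exact_mod_cast h : (k : ℕ) < (i : ℕ)).not_ge)

lemma Lm_tri (m : ℕ) : (Lm m).BlockTriangular OrderDual.toDual := by
  intro i k h
  have h' : (i : ℕ) < (k : ℕ) := by exact_mod_cast h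
  unfold Lm
  rw [if_neg (by omega), if_neg (by omega)]

lemma prod_shift (m : ℕ) :
    (∏ i ∈ Finset.range m, ((i : ℤ) + 2)) = ((m : ℤ) + 1) * ∏ i ∈ Finset.range m, ((i : ℤ) + 1) := by
  induction m with
  | zero => simp
  | succ m ih =>
    rw [Finset.prod_range_succ, Finset.prod_range_succ, ih]
    push_cast
    ring

lemma det_Cm (m : ℕ) : (Cm m).det = (-1) ^ m * ((m : ℤ) + 1) := by
  have hV : (Vm m).det = ∏ i ∈ Finset.range m, ((i : ℤ) + 1) := by
    rw [Matrix.det_of_upperTriangular (Vm_tri m)]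
    rw [← Fin.prod_univ_eq_prod_range (fun i => ((i : ℤ) + 1)) m]
    exact Finset.prod_congr rfl fun i _ => by simp [Vm]
  have hL : (Lm m).det = (-1) ^ m * ((m : ℤ) + 1) * ∏ i ∈ Finset.range m, ((i : ℤ) + 1) := by
    rw [Matrix.det_of_lowerTriangular (Lm m) (Lm_tri m)]
    have : (∏ i : Fin m, Lm m i i) = ∏ i : Fin m, (-1) * (((i : ℕ) : ℤ) + 2) := by
      refine Finset.prod_congr rfl fun i _ => ?_
      simp [Lm]
      ring
    rw [this, Finset.prod_mul_distrib, Finset.prod_const, Finset.card_univ, Fintype.card_fin]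
    rw [Fin.prod_univ_eq_prod_range (fun i => ((i : ℤ) + 2)) m, prod_shift]
    ring
  have hP : (0:ℤ) < ∏ i ∈ Finset.range m, ((i : ℤ) + 1) :=
    Finset.prod_pos fun i _ => by positivity
  have hmul : (Cm m).det * (Vm m).det = (Lm m).det := by
    rw [← Matrix.det_mul, CV_eq]
  rw [hV, hL] at hmul
  exact mul_right_cancel₀ (ne_of_gt hP) (by linarith [hmul])

def eqv (α : Type*) : α ⊕ Unit ≃ Option α where
  toFun := Sum.elim some (fun _ => none)
  invFun := fun x => Option.elim x (Sum.inr ()) Sum.inl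
  left_inv := by rintro (a | ⟨⟩) <;> rfl
  right_inv := by rintro (_ | a) <;> rfl

lemma det_option {α : Type*} [Fintype α] [DecidableEq α] (A : Matrix (Option α) (Option α) ℤ) :
    A.det = (Matrix.fromBlocks
      (Matrix.of fun a b => A (some a) (some b))
      (Matrix.of fun a (_ : Unit) => A (some a) none)
      (Matrix.of fun (_ : Unit) b => A none (some b))
      (Matrix.of fun (_ : Unit) (_ : Unit) => A none none)).det := by
  rw [← Matrix.det_submatrix_equiv_self (eqv α) A]
  congr 1
  ext x y
  rcases x with a | u <;> rcases y with b | v <;> rfl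


local notation "ι'" => Fin (p+1) × Fin (p-1)

lemma det_main (h2 : 2 ≤ p)
    (hNv : N none none = -(p : ℤ))
    (hNe : ∀ (j : Fin (p + 1)) (i : Fin (p - 1)),
      N none (some (j, i)) = if (i : ℕ) = 0 then 1 else 0)
    (hNc : ∀ (j j' : Fin (p + 1)) (i i' : Fin (p - 1)),
      N (some (j, i)) (some (j', i')) =
        if j = j' then
          (if i = i' then -2
            else if (i : ℕ) + 1 = (i' : ℕ) ∨ (i' : ℕ) + 1 = (i : ℕ) then 1 else 0)
        else 0)
    (Z : Option (Fin (p+1) × Fin (p-1)) → ℤ)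
    (hZv : Z none = (p : ℤ))
    (hNZ : N.mulVec Z = (fun x => if x = none then -1 else 0)) :
    |N.det| = (p : ℤ) ^ p := by
  have hι : True := trivial
  set U : Matrix (Option ι') (Option ι') ℤ :=
    fun x y => if y = none then Z x else if x = y then 1 else 0 with hU
  set M : Matrix (Option ι') (Option ι') ℤ :=
    fun x y => if y = none then (if x = none then -1 else 0) else N x y with hM
  -- N * U = M
  have hNU : N * U = M := by
    ext x y
    rw [Matrix.mul_apply]
    by_cases hy : y = none
    · subst hy
      have e : ∀ l, U l none = Z l := fun l => if_pos rfl
      simp only [e]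
      have : (∑ l, N x l * Z l) = N.mulVec Z x := rfl
      rw [this, hNZ]
      show _ = if (none : Option ι') = none then (if x = none then (-1:ℤ) else 0) else N x none
      rw [if_pos rfl]
    · have e : ∀ l, U l y = if l = y then (1:ℤ) else 0 := fun l => if_neg hy
      simp only [e, mul_ite, mul_one, mul_zero]
      rw [Finset.sum_ite_eq' Finset.univ y (fun l => N x l), if_pos (Finset.mem_univ y)]
      show _ = if y = none then _ else N x y
      rw [if_neg hy]
  -- det U = p
  have hdetU : U.det = (p : ℤ) := by
    rw [det_option U]
    have hUL : (Matrix.of fun (a : ι') (b : ι') => U (some a) (some b)) =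
        (1 : Matrix ι' ι' ℤ) := by
      ext a b
      show (if (some b : Option ι') = none then Z (some a)
        else if (some a : Option ι') = some b then 1 else 0) = _
      rw [if_neg (by simp)]
      by_cases hab : a = b
      · subst hab; rw [if_pos rfl, Matrix.one_apply_eq]
      · rw [if_neg (by simpa using hab), (Matrix.one_apply_ne hab)]
    have hLL : (Matrix.of fun (_ : Unit) (b : ι') => U none (some b)) = 0 := by
      ext u b
      show (if (some b : Option ι') = none then Z none
        else if (none : Option ι') = some b then 1 else 0) = 0
      rw [if_neg (by simp), if_neg (by simp)]
    have hLR : (Matrix.of fun (_ : Unit) (_ : Unit) => U none none).det = (p : ℤ) := by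
      rw [Matrix.det_unique]
      show (if (none : Option ι') = none then Z none
        else if (none : Option ι') = none then (1:ℤ) else 0) = (p : ℤ)
      rw [if_pos rfl, hZv]
    rw [hLL, Matrix.det_fromBlocks_zero₂₁, hUL, Matrix.det_one, one_mul, hLR]
  -- det M = det D * (-1)
  have hdetM : M.det = ((Cm (p-1)).det) ^ (p + 1) * (-1) := by
    rw [det_option M]
    have hUR : (Matrix.of fun (a : ι') (_ : Unit) => M (some a) none) = 0 := by
      ext a u
      show (if (none : Option ι') = none then (if (some a : Option ι') = none then (-1:ℤ) else 0)
        else N (some a) none) = 0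
      rw [if_pos rfl, if_neg (by simp)]
    have hUL : (Matrix.of fun (a : ι') (b : ι') => M (some a) (some b)) =
        (Matrix.blockDiagonal fun (_ : Fin (p+1)) => Cm (p-1)).submatrix
          (Equiv.prodComm (Fin (p+1)) (Fin (p-1)))
          (Equiv.prodComm (Fin (p+1)) (Fin (p-1))) := by
      ext ⟨j, i⟩ ⟨j', i'⟩
      show (if (some (j', i') : Option ι') = none
          then (if (some (j, i) : Option ι') = none then (-1:ℤ) else 0)
          else N (some (j, i)) (some (j', i')))
        = ((Matrix.blockDiagonal fun (_ : Fin (p+1)) => Cm (p-1)).submatrix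
          (Equiv.prodComm (Fin (p + 1)) (Fin (p - 1)))
          (Equiv.prodComm (Fin (p + 1)) (Fin (p - 1)))) (j, i) (j', i')
      rw [if_neg (by simp), hNc]
      show _ = Matrix.blockDiagonal (fun (_ : Fin (p+1)) => Cm (p-1)) (i, j) (i', j')
      rw [Matrix.blockDiagonal_apply]
      unfold Cm
      by_cases hjj : j = j' <;> simp [hjj]
    have hLR : (Matrix.of fun (_ : Unit) (_ : Unit) => M none none).det = (-1 : ℤ) := by
      rw [Matrix.det_unique]
      show (if (none : Option ι') = none then (if (none : Option ι') = none then (-1:ℤ) else 0)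
        else N none none) = -1
      rw [if_pos rfl, if_pos rfl]
    rw [hUR, Matrix.det_fromBlocks_zero₁₂, hUL,
      Matrix.det_submatrix_equiv_self, Matrix.det_blockDiagonal,
      Finset.prod_const, Finset.card_univ, Fintype.card_fin, hLR]
  -- combine
  have hdet : N.det * (p : ℤ) = ((Cm (p-1)).det) ^ (p + 1) * (-1) := by
    rw [← hdetU, ← Matrix.det_mul, hNU, hdetM]
  rw [det_Cm] at hdet
  have hcast : (((p - 1 : ℕ) : ℤ) + 1) = (p : ℤ) := by omega
  rw [hcast] at hdet
  have habs : |N.det * (p : ℤ)| = (p : ℤ) ^ (p + 1) := by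
    rw [hdet]
    simp [abs_mul, abs_pow, Int.abs_natCast]
  rw [abs_mul, Int.abs_natCast, pow_succ] at habs
  have hp0 : ((p : ℤ)) ≠ 0 := Int.natCast_ne_zero.mpr (by omega)
  exact mul_right_cancel₀ hp0 habs


end GenD4

/-- **Fundamental and canonical cycles of the generalized `D₄` intersection matrix.**
Let `p` be a prime and `N` the star-shaped intersection matrix with a central node of
self-intersection `−p` and `p+1` chains of `p−1` vertices of self-intersection `−2` attached to
the node.  Let `Z` have entry `p` at the node and entries `p−1, p−2, …, 1` along each chain.
Then `N·Z = −e_{v₀}`, `Z` is the fundamental cycle, `ᵀZ·N·Z = −p`, the canonical cycle is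
`−(p−2)·Z`, and `|det N| = p^p`. -/
theorem generalized_D4_cycles (p : ℕ) (hp : p.Prime)
    (N : Matrix (Option (Fin (p + 1) × Fin (p - 1))) (Option (Fin (p + 1) × Fin (p - 1))) ℤ)
    (hNv : N none none = -(p : ℤ))
    (hNe : ∀ (j : Fin (p + 1)) (i : Fin (p - 1)),
      N none (some (j, i)) = if (i : ℕ) = 0 then 1 else 0)
    (hNe' : ∀ (j : Fin (p + 1)) (i : Fin (p - 1)),
      N (some (j, i)) none = if (i : ℕ) = 0 then 1 else 0)
    (hNc : ∀ (j j' : Fin (p + 1)) (i i' : Fin (p - 1)),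
      N (some (j, i)) (some (j', i')) =
        if j = j' then
          (if i = i' then -2
            else if (i : ℕ) + 1 = (i' : ℕ) ∨ (i' : ℕ) + 1 = (i : ℕ) then 1 else 0)
        else 0)
    (Z : Option (Fin (p + 1) × Fin (p - 1)) → ℤ)
    (hZv : Z none = (p : ℤ))
    (hZc : ∀ (j : Fin (p + 1)) (i : Fin (p - 1)),
      Z (some (j, i)) = (p : ℤ) - 1 - ((i : ℕ) : ℤ)) :
    N.mulVec Z = (fun x => if x = none then -1 else 0) ∧
    IsFundCycle N Z ∧
    Z ⬝ᵥ N.mulVec Z = -(p : ℤ) ∧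
    N.mulVec (fun x => -((p : ℤ) - 2) * Z x) = (fun x => -N x x - 2) ∧
    |N.det| = (p : ℤ) ^ p := by
  have h2 : 2 ≤ p := hp.two_le
  have hNZ := GenD4.NZ_eq h2 hNv hNe hNe' hNc Z hZv hZc
  refine ⟨hNZ, ⟨?_, ?_, ?_, ?_⟩, ?_, ?_, ?_⟩
  · intro h0
    have h := congrFun h0 none
    rw [hZv] at h
    simp at h
    omega
  · intro x
    match x with
    | none => rw [hZv]; positivity
    | some (j, i) =>
      rw [hZc]
      have := i.isLt
      omega
  · intro x
    rw [hNZ]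
    dsimp only
    split_ifs <;> norm_num
  · intro Z' h1 h2' h3 x
    obtain ⟨hn, hs⟩ := GenD4.minimal h2 hNv hNe hNe' hNc Z' h1 h2' h3
    match x with
    | none => rw [hZv]; exact hn
    | some (j, i) => rw [hZc]; exact hs j i
  · rw [hNZ]
    show (∑ x, Z x * if x = none then (-1:ℤ) else 0) = -(p : ℤ)
    rw [Fintype.sum_option]
    simp [hZv]
  · have he : (fun x => -((p : ℤ) - 2) * Z x) = (-((p : ℤ) - 2)) • Z := rfl
    rw [he, Matrix.mulVec_smul, hNZ]
    funext x
    match x with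
    | none =>
      show -((p : ℤ) - 2) • (if (none : Option (Fin (p+1) × Fin (p-1))) = none then (-1:ℤ) else 0)
        = -N none none - 2
      rw [hNv]
      simp
    | some (j, i) =>
      show -((p : ℤ) - 2) • (if (some (j, i) : Option (Fin (p+1) × Fin (p-1))) = none
        then (-1:ℤ) else 0) = -N (some (j, i)) (some (j, i)) - 2
      rw [hNc]
      simp
  · exact GenD4.det_main h2 hNv hNe hNc Z hZv hNZ
end
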